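/- arXiv:2605.11650 — 7 statements merged into one kernel-verified Lean document; each statement's English description precedes it below -/
import Mathlib

section
/- Let ξ be a primitive n-th root of unity and β an n-th root of λ ∈ F_q^*, with gcd(n,q)=1, and let t ∈ Z_n satisfy ξ^t = β^{q-1}. For A ∈ F_{q^{m}}^n define a ∈ F_{q^m}^n by a_i = (1/(n β^i)) Σ_{j=0}^{n-1} A_j ξ^{-ij}. Then all a_i lie in F_q if and only if A_j^q = A_{qj+t mod n} for all j ∈ Z_n. -/
open Finset Polynomial

lemma aux_fixed {q : ℕ} (hq2 : 1 < q) {Fq : Type*} [Field Fq] [Fintype Fq]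
    (hcard : Fintype.card Fq = q) {K : Type*} [Field K] [Algebra Fq K] (x : K) :
    x ^ q = x ↔ x ∈ Set.range (algebraMap Fq K) := by
  classical
  constructor
  · intro hx
    by_contra hxr
    have hxim : x ∉ Finset.univ.image (algebraMap Fq K) := by
      intro hmem
      obtain ⟨z, -, hz⟩ := Finset.mem_image.1 hmem
      exact hxr ⟨z, hz⟩
    have hcardS : (insert x (Finset.univ.image (algebraMap Fq K))).card = q + 1 := by
      rw [Finset.card_insert_of_notMem hxim,
        Finset.card_image_of_injective _ (algebraMap Fq K).injective, Finset.card_univ, hcard]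
    have hsub : (insert x (Finset.univ.image (algebraMap Fq K))).val ⊆
        (X ^ q - X : K[X]).roots := by
      intro y hy
      rw [Finset.mem_val] at hy
      rw [Polynomial.mem_roots (FiniteField.X_pow_card_sub_X_ne_zero K hq2)]
      have hyq : y ^ q = y := by
        rcases Finset.mem_insert.1 hy with rfl | hy
        · exact hx
        · obtain ⟨z, -, rfl⟩ := Finset.mem_image.1 hy
          rw [← map_pow, ← hcard, FiniteField.pow_card]
      simp [Polynomial.IsRoot.def, sub_eq_zero, hyq]
    have hle := Polynomial.card_le_degree_of_subset_roots hsub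
    rw [hcardS, FiniteField.X_pow_card_sub_X_natDegree_eq K hq2] at hle
    omega
  · rintro ⟨y, rfl⟩
    rw [← map_pow, ← hcard, FiniteField.pow_card]

lemma aux_sum_val {n : ℕ} [NeZero n] {K : Type*} [AddCommMonoid K] (f : ℕ → K) :
    ∑ i : ZMod n, f i.val = ∑ i ∈ Finset.range n, f i :=
  Finset.sum_nbij' (fun i : ZMod n => i.val) (fun i : ℕ => (i : ZMod n))
    (fun a _ => Finset.mem_range.2 (ZMod.val_lt a))
    (fun a _ => Finset.mem_univ _)
    (fun a _ => ZMod.natCast_rightInverse a)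
    (fun a ha => ZMod.val_cast_of_lt (Finset.mem_range.1 ha))
    (fun a _ => rfl)

/-- Orthogonality / injectivity of the inverse DFT matrix. -/
lemma aux_dft {n : ℕ} [NeZero n] {K : Type*} [Field K] {ξ : K}
    (hξ : IsPrimitiveRoot ξ n) (hn : (n : K) ≠ 0) (c : ZMod n → K)
    (hc : ∀ i : ZMod n, ∑ j : ZMod n, c j * (ξ⁻¹) ^ (i.val * j.val) = 0) :
    ∀ j, c j = 0 := by
  have hξ0 : ξ ≠ 0 := hξ.ne_zero (NeZero.ne n)
  intro j0
  have key : ∀ j : ZMod n, ∑ i : ZMod n, (ξ ^ j0.val * (ξ⁻¹) ^ j.val) ^ i.val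
      = if j = j0 then (n : K) else 0 := by
    intro j
    set ζ : K := ξ ^ j0.val * (ξ⁻¹) ^ j.val with hζ
    have hsum : ∑ i : ZMod n, ζ ^ i.val = ∑ i ∈ Finset.range n, ζ ^ i :=
      aux_sum_val (fun i => ζ ^ i)
    by_cases hj : j = j0
    · subst hj
      have hζ1 : ζ = 1 := by
        rw [hζ, inv_pow, mul_inv_eq_one₀ (pow_ne_zero _ hξ0)]
      rw [hsum, hζ1, if_pos rfl]
      simp
    · have hζn : ζ ^ n = 1 := by
        rw [hζ, mul_pow, ← pow_mul, ← pow_mul, mul_comm j0.val n, mul_comm j.val n,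
          pow_mul, pow_mul, hξ.pow_eq_one, inv_pow, hξ.pow_eq_one, inv_one, one_pow, one_pow,
          one_mul]
      have hζ1 : ζ ≠ 1 := by
        intro h
        rw [hζ, inv_pow, mul_inv_eq_one₀ (pow_ne_zero _ hξ0)] at h
        exact hj (ZMod.val_injective n (hξ.pow_inj (ZMod.val_lt j) (ZMod.val_lt j0) h.symm))
      rw [hsum, geom_sum_eq hζ1, hζn, if_neg hj, sub_self, zero_div]
  have h0 : ∑ i : ZMod n, (∑ j : ZMod n, c j * (ξ⁻¹) ^ (i.val * j.val)) * ξ ^ (i.val * j0.val)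
      = 0 := by
    simp only [hc, zero_mul, Finset.sum_const_zero]
  have h1 : ∑ j : ZMod n, c j * ∑ i : ZMod n, (ξ ^ j0.val * (ξ⁻¹) ^ j.val) ^ i.val = 0 := by
    rw [← h0]
    calc ∑ j : ZMod n, c j * ∑ i : ZMod n, (ξ ^ j0.val * (ξ⁻¹) ^ j.val) ^ i.val
        = ∑ j : ZMod n, ∑ i : ZMod n, c j * (ξ ^ j0.val * (ξ⁻¹) ^ j.val) ^ i.val := by
          exact Finset.sum_congr rfl fun j _ => Finset.mul_sum _ _ _
      _ = ∑ i : ZMod n, ∑ j : ZMod n, c j * (ξ ^ j0.val * (ξ⁻¹) ^ j.val) ^ i.val :=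
          Finset.sum_comm
      _ = ∑ i : ZMod n, (∑ j : ZMod n, c j * (ξ⁻¹) ^ (i.val * j.val)) * ξ ^ (i.val * j0.val) := by
          refine Finset.sum_congr rfl fun i _ => ?_
          rw [Finset.sum_mul]
          refine Finset.sum_congr rfl fun j _ => ?_
          rw [mul_pow, ← pow_mul, ← pow_mul, mul_comm j0.val i.val, mul_comm j.val i.val]
          ring
  simp only [key, mul_ite, mul_zero, Finset.sum_ite_eq' Finset.univ, Finset.mem_univ,
    if_true] at h1
  exact (mul_eq_zero.1 h1).resolve_right hn

theorem stmt_1 (q n : ℕ) (hq : IsPrimePow q) [NeZero n] (hcop : Nat.Coprime n q)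
    (Fq : Type*) [Field Fq] [Fintype Fq] (hcard : Fintype.card Fq = q)
    (K : Type*) [Field K] [Algebra Fq K]
    (lam : Fq) (hlam : lam ≠ 0)
    (ξ β : K) (hξ : IsPrimitiveRoot ξ n) (hβ : β ^ n = algebraMap Fq K lam)
    (t : ZMod n) (ht : ξ ^ t.val = β ^ (q - 1))
    (A : ZMod n → K) (a : ZMod n → K)
    (ha : ∀ i : ZMod n,
      a i = ((n : K) * β ^ i.val)⁻¹ * ∑ j : ZMod n, A j * (ξ⁻¹) ^ (i.val * j.val)) :
    (∀ i, a i ∈ Set.range (algebraMap Fq K)) ↔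
      ∀ j : ZMod n, (A j) ^ q = A ((q : ZMod n) * j + t) := by
  classical
  -- characteristic setup
  haveI : CharP Fq (ringChar Fq) := ringChar.charP Fq
  obtain ⟨k, hp, hcardp⟩ := FiniteField.card Fq (ringChar Fq)
  set p := ringChar Fq with hpdef
  haveI hfp : Fact p.Prime := ⟨hp⟩
  have hqpk : q = p ^ (k : ℕ) := by rw [← hcard, hcardp]
  have hq2 : 1 < q := hq.two_le
  haveI hcharK : CharP K p := charP_of_injective_algebraMap (algebraMap Fq K).injective p
  set φ : K →+* K := iterateFrobenius K p k with hφdef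
  have hφ' : ∀ x : K, φ x = x ^ q := fun x => by
    rw [hφdef, iterateFrobenius_def, ← hqpk]
  -- nonvanishing facts
  have hpn : ¬ (p ∣ n) := by
    intro hdvd
    have hpq : p ∣ q := hqpk ▸ dvd_pow_self p k.pos.ne'
    have := Nat.dvd_gcd hdvd hpq
    rw [Nat.Coprime] at hcop
    rw [hcop] at this
    exact hp.one_lt.ne' (Nat.dvd_one.1 this)
  have hnK : (n : K) ≠ 0 := by
    rw [Ne, CharP.cast_eq_zero_iff K p]
    exact hpn
  have hβ0 : β ≠ 0 := by
    intro h
    rw [h, zero_pow (NeZero.ne n)] at hβ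
    exact hlam ((_root_.map_eq_zero _).1 hβ.symm)
  have hξ0 : ξ ≠ 0 := hξ.ne_zero (NeZero.ne n)
  -- power mod n
  have hmod : ∀ a b : ℕ, a ≡ b [MOD n] → (ξ⁻¹ : K) ^ a = (ξ⁻¹) ^ b := by
    have hη1 : (ξ⁻¹ : K) ^ n = 1 := by rw [inv_pow, hξ.pow_eq_one, inv_one]
    have haux : ∀ a : ℕ, (ξ⁻¹ : K) ^ a = (ξ⁻¹) ^ (a % n) := by
      intro a
      conv_lhs => rw [← Nat.div_add_mod a n]
      rw [pow_add, pow_mul, hη1, one_pow, one_mul]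
    intro a b hab
    rw [haux a, haux b, hab]
  have hβq : β ^ q = β * ξ ^ t.val := by
    have h1 : q = (q - 1) + 1 := by omega
    conv_lhs => rw [h1]
    rw [pow_succ, ← ht, mul_comm]
  -- the reindexing bijection j ↦ q j + t
  have hu : IsUnit ((q : ℕ) : ZMod n) := (ZMod.isUnit_iff_coprime q n).2 hcop.symm
  obtain ⟨u, hu'⟩ := hu
  let e : ZMod n ≃ ZMod n :=
    { toFun := fun j => (q : ZMod n) * j + t
      invFun := fun j => (↑u⁻¹ : ZMod n) * (j - t)
      left_inv := fun j => by
        show (↑u⁻¹ : ZMod n) * ((q : ZMod n) * j + t - t) = j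
        rw [add_sub_cancel_right, ← hu', ← mul_assoc, Units.inv_mul, one_mul]
      right_inv := fun j => by
        show (q : ZMod n) * ((↑u⁻¹ : ZMod n) * (j - t)) + t = j
        rw [← hu', ← mul_assoc, Units.mul_inv, one_mul, sub_add_cancel] }
  set B : ZMod n → K := fun j => A (e.symm j) ^ q with hBdef
  -- reindexing of the twisted sum
  have hre : ∀ i : ZMod n, ∑ j : ZMod n, B j * (ξ⁻¹) ^ (i.val * j.val)
      = ∑ j : ZMod n, (A j) ^ q * (ξ⁻¹) ^ (i.val * j.val * q + i.val * t.val) := by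
    intro i
    rw [← Equiv.sum_comp e (fun j => B j * (ξ⁻¹) ^ (i.val * j.val))]
    refine Finset.sum_congr rfl fun j _ => ?_
    have hBe : B (e j) = (A j) ^ q := by
      rw [hBdef]
      simp only [Equiv.symm_apply_apply]
    have hval : ((q : ZMod n) * j + t).val ≡ q * j.val + t.val [MOD n] := by
      rw [ZMod.val_add, ZMod.val_mul, ZMod.val_natCast]
      calc ((q % n) * j.val % n + t.val) % n
          ≡ (q % n) * j.val % n + t.val [MOD n] := Nat.mod_modEq _ n
        _ ≡ (q % n) * j.val + t.val [MOD n] := Nat.ModEq.add_right _ (Nat.mod_modEq _ n)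
        _ ≡ q * j.val + t.val [MOD n] :=
            Nat.ModEq.add_right _ (Nat.ModEq.mul_right _ (Nat.mod_modEq q n))
    have hmul : i.val * ((q : ZMod n) * j + t).val ≡ i.val * j.val * q + i.val * t.val [MOD n] := by
      have h2 := hval.mul_left i.val
      have h3 : i.val * (q * j.val + t.val) = i.val * j.val * q + i.val * t.val := by ring
      rw [h3] at h2
      exact h2
    have hexp : (ξ⁻¹ : K) ^ (i.val * (e j).val)
        = (ξ⁻¹) ^ (i.val * j.val * q + i.val * t.val) := hmod _ _ hmul
    rw [hBe, hexp]
  -- Frobenius of a i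
  have hφa : ∀ i : ZMod n, φ (a i) =
      ((n : K) * β ^ i.val)⁻¹ * ∑ j : ZMod n, B j * (ξ⁻¹) ^ (i.val * j.val) := by
    intro i
    have h1 : φ ((n : K) * β ^ i.val) = (n : K) * β ^ i.val * ξ ^ (i.val * t.val) := by
      rw [map_mul, map_natCast, hφ' (β ^ i.val), ← pow_mul, mul_comm i.val q, pow_mul, hβq,
        mul_pow, ← pow_mul, mul_comm t.val i.val, mul_assoc]
    have h2 : φ (∑ j : ZMod n, A j * (ξ⁻¹) ^ (i.val * j.val)) =
        ∑ j : ZMod n, (A j) ^ q * (ξ⁻¹) ^ (i.val * j.val * q) := by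
      rw [map_sum]
      refine Finset.sum_congr rfl fun j _ => ?_
      rw [map_mul, hφ', hφ', ← pow_mul]
    calc φ (a i) = ((n : K) * β ^ i.val * ξ ^ (i.val * t.val))⁻¹ *
          ∑ j : ZMod n, (A j) ^ q * (ξ⁻¹) ^ (i.val * j.val * q) := by
            rw [ha i, map_mul, map_inv₀, h1, h2]
      _ = ((n : K) * β ^ i.val)⁻¹ *
          ∑ j : ZMod n, (A j) ^ q * (ξ⁻¹) ^ (i.val * j.val * q + i.val * t.val) := by
            have hs : (ξ⁻¹ : K) ^ (i.val * t.val) *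
                ∑ j : ZMod n, (A j) ^ q * (ξ⁻¹) ^ (i.val * j.val * q)
                = ∑ j : ZMod n, (A j) ^ q * (ξ⁻¹) ^ (i.val * j.val * q + i.val * t.val) := by
              rw [Finset.mul_sum]
              refine Finset.sum_congr rfl fun j _ => ?_
              rw [pow_add]; ring
            rw [mul_inv, ← inv_pow, mul_assoc, hs]
      _ = ((n : K) * β ^ i.val)⁻¹ * ∑ j : ZMod n, B j * (ξ⁻¹) ^ (i.val * j.val) := by
            rw [hre i]
  have hc0 : ∀ i : ZMod n, ((n : K) * β ^ i.val)⁻¹ ≠ 0 :=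
    fun i => inv_ne_zero (mul_ne_zero hnK (pow_ne_zero _ hβ0))
  constructor
  · intro h
    have hS : ∀ i : ZMod n, ∑ j : ZMod n, (B j - A j) * (ξ⁻¹) ^ (i.val * j.val) = 0 := by
      intro i
      have h1 : φ (a i) = a i := by
        rw [hφ']
        exact (aux_fixed hq2 hcard (a i)).2 (h i)
      have h2 := hφa i
      rw [h1, ha i] at h2
      have h3 := mul_left_cancel₀ (hc0 i) h2
      simp only [sub_mul]
      rw [Finset.sum_sub_distrib, h3, sub_self]
    have hz := aux_dft hξ hnK (fun j => B j - A j) hS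
    intro j
    have h4 : B (e j) - A (e j) = 0 := hz (e j)
    have hBe : B (e j) = (A j) ^ q := by
      rw [hBdef]
      simp only [Equiv.symm_apply_apply]
    rw [hBe] at h4
    exact sub_eq_zero.1 h4
  · intro h i
    rw [← aux_fixed hq2 hcard, ← hφ']
    have hBA : ∀ j, B j = A j := by
      intro j
      rw [hBdef]
      show A (e.symm j) ^ q = A j
      rw [h (e.symm j)]
      congr 1
      exact e.apply_symm_apply j
    rw [hφa i, ha i]
    congr 1
    exact Finset.sum_congr rfl fun j _ => by rw [hBA j]
end

section
/- Let ξ be a primitive n-th root of unity and β an n-th root of λ ∈ F_q^*, gcd(n,q)=1, and t ∈ Z_n with ξ^t = β^{q-1}. For a subset K ⊆ Z_n, the polynomial g(x) = Π_{k∈K} (x - ξ^k β) has all its coefficients in F_q if and only if K is closed under the affine map k ↦ qk + t (mod n). -/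
open Polynomial

theorem stmt_2 (q n : ℕ) (hq : IsPrimePow q) [NeZero n] (hcop : Nat.Coprime n q)
    (Fq : Type*) [Field Fq] [Fintype Fq] (hcard : Fintype.card Fq = q)
    (K : Type*) [Field K] [Algebra Fq K]
    (lam : Fq) (hlam : lam ≠ 0)
    (ξ β : K) (hξ : IsPrimitiveRoot ξ n) (hβ : β ^ n = algebraMap Fq K lam)
    (t : ZMod n) (ht : ξ ^ t.val = β ^ (q - 1))
    (S : Finset (ZMod n)) :
    (∀ i : ℕ, (∏ k ∈ S, (X - C (ξ ^ k.val * β))).coeff i ∈ Set.range (algebraMap Fq K))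
      ↔ ∀ k ∈ S, (q : ZMod n) * k + t ∈ S := by
  classical
  have hq2 : 2 ≤ q := hq.two_le
  set p := ringChar Fq with hpdef
  haveI : CharP Fq p := ringChar.charP Fq
  obtain ⟨e, hp, hcard'⟩ := FiniteField.card Fq p
  have hqpe : q = p ^ (e : ℕ) := by rw [← hcard, hcard']
  haveI : CharP K p := charP_of_injective_algebraMap (algebraMap Fq K).injective p
  haveI : Fact p.Prime := ⟨hp⟩
  set φ : K →+* K := iterateFrobenius K p e with hφdef
  have hφ : ∀ x : K, φ x = x ^ q := fun x => by
    rw [hφdef, iterateFrobenius_def, hqpe]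
  have hpowFq : ∀ a : Fq, a ^ q = a := fun a => by
    rw [← hcard]; exact FiniteField.pow_card a
  have hfix : ∀ x : K, x ^ q = x → x ∈ Set.range (algebraMap Fq K) := by
    intro x hx
    set f : K[X] := X ^ q - X with hf
    have hdeg : f.natDegree = q := by
      rw [hf]
      rw [natDegree_sub_eq_left_of_natDegree_lt] <;> simp <;> omega
    have hf0 : f ≠ 0 := by
      intro h; rw [h] at hdeg; simp at hdeg; omega
    have hroot : ∀ y : K, y ^ q = y → y ∈ f.roots.toFinset := by
      intro y hy
      rw [Multiset.mem_toFinset, mem_roots hf0]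
      simp [hf, IsRoot, hy]
    set T := Finset.univ.image (algebraMap Fq K) with hT
    have hTcard : T.card = q := by
      rw [hT, Finset.card_image_of_injective _ (algebraMap Fq K).injective,
        Finset.card_univ, hcard]
    have hTsub : T ⊆ f.roots.toFinset := by
      intro y hy
      obtain ⟨a, _, rfl⟩ := Finset.mem_image.mp hy
      exact hroot _ (by rw [← map_pow, hpowFq])
    have hle : f.roots.toFinset.card ≤ T.card := by
      rw [hTcard]
      calc f.roots.toFinset.card ≤ Multiset.card f.roots := Multiset.toFinset_card_le _
        _ ≤ f.natDegree := f.card_roots'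
        _ = q := hdeg
    have : T = f.roots.toFinset := Finset.eq_of_subset_of_card_le hTsub hle
    have hxT : x ∈ T := this ▸ hroot x hx
    obtain ⟨a, _, ha⟩ := Finset.mem_image.mp hxT
    exact ⟨a, ha⟩
  have hβ0 : β ≠ 0 := by
    intro h
    apply hlam
    rw [h, zero_pow (NeZero.ne n)] at hβ
    exact (_root_.map_eq_zero (algebraMap Fq K)).mp hβ.symm
  set r : ZMod n → K := fun k => ξ ^ k.val * β with hr
  have hξm : ∀ m : ℕ, ξ ^ ((m : ZMod n)).val = ξ ^ m := by
    intro m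
    rw [ZMod.val_natCast]
    conv_rhs => rw [← Nat.div_add_mod m n]
    rw [pow_add, pow_mul, hξ.pow_eq_one, one_pow, one_mul]
  have hrinj : Function.Injective r := by
    intro a b hab
    have h1 : ξ ^ a.val = ξ ^ b.val := mul_right_cancel₀ hβ0 hab
    have h2 := hξ.pow_inj a.val_lt b.val_lt h1
    exact ZMod.val_injective n h2
  set σ : ZMod n → ZMod n := fun k => (q : ZMod n) * k + t with hσ
  have hσinj : Function.Injective σ := by
    intro a b hab
    have h1 : (q : ZMod n) * a = (q : ZMod n) * b := by
      have := add_right_cancel (hσ ▸ hab)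
      exact this
    have hu : IsUnit (q : ZMod n) := (ZMod.isUnit_iff_coprime q n).mpr hcop.symm
    exact hu.mul_left_cancel h1
  have hrq : ∀ k : ZMod n, r k ^ q = r (σ k) := by
    intro k
    have hβq : β ^ q = ξ ^ t.val * β := by
      rw [ht, ← pow_succ]
      congr 1
      omega
    have h1 : σ k = ((k.val * q + t.val : ℕ) : ZMod n) := by
      show (q : ZMod n) * k + t = _
      push_cast
      rw [ZMod.natCast_val, ZMod.natCast_val, ZMod.cast_id, ZMod.cast_id]
      ring
    show (ξ ^ k.val * β) ^ q = ξ ^ (σ k).val * β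
    rw [mul_pow, ← pow_mul, hβq, h1, hξm, pow_add]
    ring
  have hmap : (∏ k ∈ S, (X - C (r k))).map φ = ∏ k ∈ S, (X - C (r (σ k))) := by
    rw [Polynomial.map_prod]
    refine Finset.prod_congr rfl fun k _ => ?_
    rw [Polynomial.map_sub, map_X, map_C, hφ, hrq]
  constructor
  · intro hcoeff k hk
    have heq : (∏ k ∈ S, (X - C (r k))).map φ = ∏ k ∈ S, (X - C (r k)) := by
      ext i
      rw [coeff_map]
      obtain ⟨a, ha⟩ := hcoeff i
      rw [← ha, hφ, ← map_pow, hpowFq]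
    have hev : ∏ k' ∈ S, (r (σ k) - r k') = 0 := by
      have h2 : ∏ k' ∈ S, (X - C (r (σ k'))) = ∏ k' ∈ S, (X - C (r k')) :=
        hmap.symm.trans heq
      have h3 := congrArg (eval (r (σ k))) h2
      simp only [eval_prod, eval_sub, eval_X, eval_C] at h3
      rw [← h3]
      exact Finset.prod_eq_zero hk (by ring)
    obtain ⟨k', hk', hz⟩ := Finset.prod_eq_zero_iff.mp hev
    have : σ k = k' := hrinj (sub_eq_zero.mp hz)
    show σ k ∈ S
    rw [this]; exact hk'
  · intro hS i
    have himg : S.image σ = S := by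
      refine Finset.eq_of_subset_of_card_le ?_
        (by rw [Finset.card_image_of_injective _ hσinj])
      intro x hx
      obtain ⟨k, hk, rfl⟩ := Finset.mem_image.mp hx
      exact hS k hk
    have heq : (∏ k ∈ S, (X - C (r k))).map φ = ∏ k ∈ S, (X - C (r k)) := by
      rw [hmap, ← Finset.prod_image (f := fun k => X - C (r k))
        (fun a _ b _ h => hσinj h), himg]
    have hc := congrArg (fun g => Polynomial.coeff g i) heq
    simp only [coeff_map] at hc
    exact hfix _ (by rw [← hφ]; exact hc)
end

section
/- Let C = ⟨g(x)⟩ be a λ-constacyclic code of length n over F_q with complete generating set G with respect to (ξ, β). Then G is a union of cosets of a nontrivial proper subgroup of Z_n if and only if g(x) = u(x^v) for some polynomial u and some divisor v of n with 1 < v < n. -/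
open Polynomial

theorem aux_coeff_comp {K : Type*} [CommRing K] (p : K[X]) (e : K) (j : ℕ) :
    (p.comp (C e * X)).coeff j = e ^ j * p.coeff j := by
  induction p using Polynomial.induction_on' with
  | add f g hf hg => simp [add_comp, hf, hg, mul_add]
  | monomial k a =>
      simp only [monomial_comp, mul_pow, ← C_pow, coeff_C_mul, coeff_monomial, coeff_X_pow]
      rcases eq_or_ne j k with h | h
      · subst h; simp; ring
      · simp [h, Ne.symm h]

theorem stmt_7 (q n : ℕ) (hq : IsPrimePow q) [NeZero n] (hcop : Nat.Coprime n q)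
    (Fq : Type*) [Field Fq] [Fintype Fq] (hcard : Fintype.card Fq = q)
    (K : Type*) [Field K] [Algebra Fq K]
    (lam : Fq) (hlam : lam ≠ 0)
    (ξ β : K) (hξ : IsPrimitiveRoot ξ n) (hβ : β ^ n = algebraMap Fq K lam)
    (hsplit : Polynomial.Splits ((X ^ n - C lam).map (algebraMap Fq K)))
    (g : Fq[X]) (hg : g.Monic) (hgdvd : g ∣ X ^ n - C lam)
    (G : Set (ZMod n)) (hG : G = {i | aeval (ξ ^ i.val * β) g ≠ 0}) :
    (∃ H : AddSubgroup (ZMod n), H ≠ ⊥ ∧ H ≠ ⊤ ∧ ∀ a ∈ G, ∀ h ∈ H, a + h ∈ G)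
      ↔ ∃ (u : Fq[X]) (v : ℕ), v ∣ n ∧ 1 < v ∧ v < n ∧ g = u.comp (X ^ v) := by
  have hn : 0 < n := Nat.pos_of_ne_zero (NeZero.ne n)
  have hf : Function.Injective (algebraMap Fq K) := (algebraMap Fq K).injective
  have hlam' : algebraMap Fq K lam ≠ 0 := fun h => hlam (hf (by simpa using h))
  have hβ0 : β ≠ 0 := fun h => hlam' (by rw [← hβ, h, zero_pow hn.ne'])
  have hmodr : ∀ a : ℕ, ξ ^ a = ξ ^ (a % n) := by
    intro a
    conv_lhs => rw [← Nat.mod_add_div a n]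
    rw [pow_add, pow_mul, hξ.pow_eq_one, one_pow, mul_one]
  have hmod : ∀ a b : ℕ, a ≡ b [MOD n] → ξ ^ a = ξ ^ b := by
    intro a b hab
    rw [hmodr a, hmodr b]
    exact congrArg _ hab
  constructor
  · rintro ⟨H, hHbot, hHtop, hclosed⟩
    obtain ⟨t, htH, ht0⟩ : ∃ t ∈ H, t ≠ 0 := by
      by_contra hco
      push_neg at hco
      exact hHbot (by
        ext x
        simp only [AddSubgroup.mem_bot]
        exact ⟨fun hx => hco x hx, fun hx => hx ▸ H.zero_mem⟩)
    set gK : K[X] := g.map (algebraMap Fq K) with hgKdef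
    have hgKm : gK.Monic := hg.map _
    set lam' : K := algebraMap Fq K lam with hlamdef
    have hP : (X ^ n - C lam' : K[X]) = ∏ i ∈ Finset.range n, (X - C (ξ ^ i * β)) :=
      X_pow_sub_C_eq_prod hξ hn hβ
    have hPm : (X ^ n - C lam' : K[X]).Monic := monic_X_pow_sub_C _ hn.ne'
    have hP0 : (X ^ n - C lam' : K[X]) ≠ 0 := hPm.ne_zero
    have hgKdvd : gK ∣ X ^ n - C lam' := by
      have := Polynomial.map_dvd (algebraMap Fq K) hgdvd
      simpa [Polynomial.map_sub, Polynomial.map_pow] using this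
    have hsplitsP : Splits (X ^ n - C lam' : K[X]) := by
      have := hsplit
      simpa [Polynomial.map_sub, Polynomial.map_pow] using this
    have hgsplits : Splits gK :=
      hsplitsP.of_dvd hP0 hgKdvd
    have hgK0 : gK ≠ 0 := hgKm.ne_zero
    have hProots : (X ^ n - C lam' : K[X]).roots
        = (Finset.range n).val.map (fun i => ξ ^ i * β) := by
      have h2 : (∏ i ∈ Finset.range n, (X - C (ξ ^ i * β)))
          = (((Finset.range n).val.map (fun i => ξ ^ i * β)).map (fun a => X - C a)).prod := by
        rw [Multiset.map_map]; rfl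
      rw [hP, h2, roots_multiset_prod_X_sub_C]
    have hrles : gK.roots ≤ (X ^ n - C lam' : K[X]).roots := roots.le_of_dvd hP0 hgKdvd
    have hnodupP : (X ^ n - C lam' : K[X]).roots.Nodup := by
      rw [hProots]
      refine Multiset.Nodup.map_on ?_ (Finset.range n).nodup
      intro i hi j hj hij
      have hi' : i < n := Finset.mem_range.mp hi
      have hj' : j < n := Finset.mem_range.mp hj
      exact hξ.pow_inj hi' hj' (mul_right_cancel₀ hβ0 hij)
    have hnodupg : gK.roots.Nodup := Multiset.nodup_of_le hrles hnodupP
    have haev : ∀ x : K, aeval x g = gK.eval x := by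
      intro x; rw [aeval_def, eval_map]
    have hmemroot : ∀ r ∈ gK.roots, ∃ i : ZMod n, r = ξ ^ i.val * β ∧ i ∉ G := by
      intro r hr
      have hrP := Multiset.mem_of_le hrles hr
      rw [hProots, Multiset.mem_map] at hrP
      obtain ⟨i, hi, rfl⟩ := hrP
      have hi' : i < n := Finset.mem_range.mp (by simpa using hi)
      refine ⟨(i : ZMod n), by rw [ZMod.val_cast_of_lt hi'], ?_⟩
      have hev : gK.eval (ξ ^ i * β) = 0 := (mem_roots hgK0).mp hr
      rw [hG]
      simp only [Set.mem_setOf_eq, not_not]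
      rw [haev, ZMod.val_cast_of_lt hi']
      exact hev
    set e : K := ξ ^ t.val with hedef
    set h : K[X] := gK.comp (C e * X) with hhdef
    have hcoeffh : ∀ j, h.coeff j = e ^ j * gK.coeff j := fun j => aux_coeff_comp gK e j
    have hc0 : g.coeff 0 ≠ 0 := by
      intro h0
      have hx : (X : Fq[X]) ∣ X ^ n - C lam := (X_dvd_iff.mpr h0).trans hgdvd
      have := X_dvd_iff.mp hx
      rw [coeff_sub, coeff_X_pow, coeff_C] at this
      simp [hn.ne', eq_comm (a := (0:ℕ))] at this
      exact hlam this
    have hgK00 : gK.coeff 0 ≠ 0 := by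
      rw [hgKdef, coeff_map]
      exact fun hz => hc0 (hf (by simpa using hz))
    have hh0 : h ≠ 0 := by
      intro hz
      apply hgK00
      have := hcoeffh 0
      rw [hz] at this
      simpa using this.symm
    have hgroots_le : gK.roots ≤ h.roots := by
      rw [Multiset.le_iff_subset hnodupg]
      intro r hr
      obtain ⟨i, rfl, hiG⟩ := hmemroot r hr
      rw [mem_roots hh0]
      have hit : i + t ∉ G := by
        intro hmem
        have := hclosed _ hmem (-t) (H.neg_mem htH)
        exact hiG (by simpa using this)
      rw [hG] at hit
      simp only [Set.mem_setOf_eq, not_not] at hit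
      rw [haev] at hit
      have harg : e * (ξ ^ i.val * β) = ξ ^ (i + t).val * β := by
        rw [hedef, ← mul_assoc, ← pow_add]
        have hexp : ξ ^ (t.val + i.val) = ξ ^ ((i + t).val) := by
          apply hmod
          rw [ZMod.val_add]
          calc t.val + i.val = i.val + t.val := by ring
            _ ≡ (i.val + t.val) % n [MOD n] := (Nat.mod_modEq _ _).symm
        rw [hexp]
      show IsRoot h _
      rw [IsRoot, hhdef, eval_comp]
      simp only [eval_mul, eval_C, eval_X]
      rw [harg, hit]
    have hdvdh : gK ∣ h := by
      calc gK = (gK.roots.map fun a => X - C a).prod :=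
            hgsplits.eq_prod_roots_of_monic hgKm
        _ ∣ (h.roots.map fun a => X - C a).prod :=
            Multiset.prod_dvd_prod_of_le (Multiset.map_le_map hgroots_le)
        _ ∣ h := prod_multiset_X_sub_C_dvd h
    have hξ0 : ξ ≠ 0 := fun hz =>
      one_ne_zero (α := K) (by rw [← hξ.pow_eq_one, hz, zero_pow hn.ne'])
    have he0 : e ≠ 0 := pow_ne_zero _ hξ0
    have hdegh : h.natDegree = gK.natDegree := by
      rw [hhdef, natDegree_comp]
      have : (C e * X : K[X]).natDegree = 1 := by
        rw [natDegree_C_mul_X _ he0]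
      rw [this, mul_one]
    obtain ⟨c, hc⟩ := hdvdh
    have hcne : c ≠ 0 := by
      intro hz; rw [hz, mul_zero] at hc; exact hh0 hc
    have hcdeg : c.natDegree = 0 := by
      have := natDegree_mul hgK0 hcne
      rw [← hc, hdegh] at this
      omega
    obtain ⟨a, ha⟩ := Polynomial.natDegree_eq_zero.mp hcdeg
    have key : ∀ j, e ^ j * gK.coeff j = gK.coeff j * a := by
      intro j
      have h1 := hcoeffh j
      rw [hc, ← ha, coeff_mul_C] at h1
      exact h1.symm
    have ha1 : a = 1 := by
      have h0 := key 0
      rw [pow_zero, one_mul] at h0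
      have h1 : gK.coeff 0 * 1 = gK.coeff 0 * a := by rw [mul_one]; exact h0
      exact (mul_left_cancel₀ hgK00 h1).symm
    have hpow1 : ∀ j, g.coeff j ≠ 0 → ξ ^ (t.val * j) = 1 := by
      intro j hj
      have hKj : gK.coeff j ≠ 0 := by
        rw [hgKdef, coeff_map]
        exact fun hz => hj (hf (by simpa using hz))
      have hk := key j
      rw [ha1, mul_one] at hk
      have hej : e ^ j = 1 := by
        have hk' : e ^ j * gK.coeff j = 1 * gK.coeff j := by rw [one_mul]; exact hk
        exact mul_right_cancel₀ hKj hk'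
      rw [hedef, ← pow_mul] at hej
      exact hej
    have hdvdn : ∀ j, g.coeff j ≠ 0 → n ∣ t.val * j := fun j hj =>
      (hξ.pow_eq_one_iff_dvd _).mp (hpow1 j hj)
    set d : ℕ := Nat.gcd t.val n with hddef
    have htval0 : t.val ≠ 0 := fun hz => ht0 (by rwa [← ZMod.val_eq_zero])
    have hd0 : 0 < d := Nat.gcd_pos_of_pos_left _ (Nat.pos_of_ne_zero htval0)
    have hdn : d ∣ n := Nat.gcd_dvd_right _ _
    have hdt : d ∣ t.val := Nat.gcd_dvd_left _ _
    have hd1 : 1 < d := by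
      rcases Nat.lt_or_ge 1 d with h' | h'
      · exact h'
      exfalso
      have hdeq : d = 1 := le_antisymm h' hd0
      apply hHtop
      have h1 : (1 : ZMod n) ∈ H := by
        have hbez := Nat.gcd_eq_gcd_ab t.val n
        rw [← hddef, hdeq] at hbez
        have hcast : (1 : ZMod n) = (Nat.gcdA t.val n : ZMod n) * t := by
          have := congrArg (fun z : ℤ => ((z : ℤ) : ZMod n)) hbez
          push_cast at this
          rw [ZMod.natCast_self, zero_mul, add_zero] at this
          rw [this, ZMod.natCast_val, ZMod.cast_id]
          ring
        rw [hcast, ← zsmul_eq_mul]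
        exact H.zsmul_mem htH _
      rw [AddSubgroup.eq_top_iff']
      intro x
      have hx : x = x.val • (1 : ZMod n) := by
        rw [nsmul_eq_mul, mul_one, ZMod.natCast_val, ZMod.cast_id]
      rw [hx]
      exact AddSubgroup.nsmul_mem H h1 _
    set v : ℕ := n / d with hvdef
    have hvdvd : v ∣ n := Nat.div_dvd_of_dvd hdn
    have hnv : d * v = n := Nat.mul_div_cancel' hdn
    have hdltn : d < n := lt_of_le_of_lt (Nat.le_of_dvd (Nat.pos_of_ne_zero htval0) hdt) t.val_lt
    have hv1 : 1 < v := by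
      rcases Nat.lt_or_ge 1 v with h' | h'
      · exact h'
      interval_cases v
      · omega
      · omega
    have hvn : v < n := Nat.div_lt_self hn hd1
    have hcoeffdvd : ∀ j, ¬ v ∣ j → g.coeff j = 0 := by
      intro j hvj
      by_contra hj
      apply hvj
      have hnd : n ∣ t.val * j := hdvdn j hj
      have hco : Nat.Coprime v (t.val / d) :=
        Nat.Coprime.symm (Nat.coprime_div_gcd_div_gcd hd0)
      have hvd : v ∣ t.val / d * j := by
        obtain ⟨k, hk⟩ := hnd
        refine ⟨k, ?_⟩
        apply Nat.eq_of_mul_eq_mul_left hd0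
        calc d * (t.val / d * j) = d * (t.val / d) * j := by ring
          _ = t.val * j := by rw [Nat.mul_div_cancel' hdt]
          _ = n * k := hk
          _ = d * (v * k) := by rw [← hnv]; ring
      exact (Nat.Coprime.dvd_of_dvd_mul_left hco hvd)
    refine ⟨Polynomial.contract v g, v, hvdvd, hv1, hvn, ?_⟩
    rw [← expand_eq_comp_X_pow]
    ext j
    rw [coeff_expand (by omega : 0 < v)]
    split_ifs with hdv
    · rw [coeff_contract (by omega : v ≠ 0), Nat.div_mul_cancel hdv]
    · exact hcoeffdvd j hdv
  · rintro ⟨u, v, hvdvd, hv1, hvn, hguv⟩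
    have hv0 : 0 < v := by omega
    set c : ZMod n := ((n / v : ℕ) : ZMod n) with hcdef
    refine ⟨AddSubgroup.zmultiples c, ?_, ?_, ?_⟩
    · intro hbot
      have hc : c ∈ AddSubgroup.zmultiples c := AddSubgroup.mem_zmultiples c
      rw [hbot, AddSubgroup.mem_bot] at hc
      rw [hcdef, ZMod.natCast_eq_zero_iff] at hc
      have h1 : 0 < n / v := Nat.div_pos (Nat.le_of_dvd hn hvdvd) hv0
      have h2 : n / v < n := Nat.div_lt_self hn hv1
      exact absurd (Nat.le_of_dvd h1 hc) (by omega)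
    · have hann : ∀ x ∈ AddSubgroup.zmultiples c, (v : ZMod n) * x = 0 := by
        intro x hx
        obtain ⟨k, rfl⟩ := AddSubgroup.mem_zmultiples_iff.mp hx
        rw [mul_smul_comm]
        have hvc : (v : ZMod n) * c = 0 := by
          rw [hcdef, ← Nat.cast_mul, Nat.mul_div_cancel' hvdvd, ZMod.natCast_self]
        rw [hvc, smul_zero]
      intro htop
      have := hann 1 (htop ▸ AddSubgroup.mem_top 1)
      rw [mul_one, ZMod.natCast_eq_zero_iff] at this
      exact absurd (Nat.le_of_dvd hv0 this) (by omega)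
    · intro a haG h hH
      have hann : n ∣ h.val * v := by
        have hx : (v : ZMod n) * h = 0 := by
          obtain ⟨k, rfl⟩ := AddSubgroup.mem_zmultiples_iff.mp hH
          rw [mul_smul_comm]
          have hvc : (v : ZMod n) * c = 0 := by
            rw [hcdef, ← Nat.cast_mul, Nat.mul_div_cancel' hvdvd, ZMod.natCast_self]
          rw [hvc, smul_zero]
        rw [← ZMod.natCast_eq_zero_iff]
        push_cast
        rw [ZMod.natCast_val, ZMod.cast_id, mul_comm]
        exact hx
      have hveval : (ξ ^ (a + h).val * β) ^ v = (ξ ^ a.val * β) ^ v := by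
        rw [mul_pow, mul_pow, ← pow_mul, ← pow_mul]
        congr 1
        apply hmod
        calc (a + h).val * v ≡ (a.val + h.val) * v [MOD n] := by
              rw [ZMod.val_add]
              exact Nat.ModEq.mul_right v (Nat.mod_modEq _ _)
          _ = a.val * v + h.val * v := by ring
          _ ≡ a.val * v + 0 [MOD n] :=
              Nat.ModEq.add_left _ ((Nat.modEq_zero_iff_dvd).mpr hann)
          _ = a.val * v := by ring
      rw [hG] at haG ⊢
      simp only [Set.mem_setOf_eq] at haG ⊢
      rw [hguv, aeval_comp] at haG ⊢
      simp only [map_pow, aeval_X] at haG ⊢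
      rw [hveval]
      exact haG
end

section
/- Let p(x) = Σ_{i=0}^{n/v − 1} α^i x^{iv} with α ∈ F_q^*, v | n, and let ξ be a primitive n-th root of unity and β an n-th root of λ, with p(x) dividing x^n − λ. Then the spectral support {k ∈ Z_n : p(ξ^k β) ≠ 0} is a single coset of the subgroup ⟨n/v⟩ of Z_n, namely {k : ξ^{kv} = α^{-1} β^{-v}}. -/
open Polynomial

lemma aux_mem_zmultiples {n m : ℕ} [NeZero n] (hm : m ∣ n) (x : ZMod n) :
    x ∈ AddSubgroup.zmultiples ((m : ℕ) : ZMod n) ↔ (m : ℤ) ∣ (x.val : ℤ) := by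
  have hcast : ∀ y : ZMod n, (((y.val : ℤ) : ZMod n)) = y := by
    intro y
    push_cast
    simp [ZMod.natCast_val, ZMod.cast_id]
  constructor
  · rintro ⟨t, rfl⟩
    have e2 : ((t • ((m : ℕ) : ZMod n)).val : ℤ) ≡ t * m [ZMOD n] := by
      rw [← ZMod.intCast_eq_intCast_iff]
      rw [hcast]
      push_cast
      rw [zsmul_eq_mul]
    have hd : (n : ℤ) ∣ t * m - ((t • ((m : ℕ) : ZMod n)).val : ℤ) := e2.dvd
    have hmn : (m : ℤ) ∣ (n : ℤ) := Int.natCast_dvd_natCast.mpr hm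
    have h1 : (m : ℤ) ∣ t * m - ((t • ((m : ℕ) : ZMod n)).val : ℤ) := hmn.trans hd
    have h2 : (m : ℤ) ∣ t * m := Dvd.intro_left t rfl
    have := dvd_sub h2 h1
    simpa using this
  · rintro ⟨s, hs⟩
    refine ⟨s, ?_⟩
    have : (((m : ℤ) * s : ℤ) : ZMod n) = x := by rw [← hs, hcast]
    show s • ((m : ℕ) : ZMod n) = x
    rw [zsmul_eq_mul]
    push_cast at this
    rw [mul_comm] at this
    exact this

lemma aux_dvd_iff_of_modEq {n m : ℕ} (hm : (m : ℤ) ∣ (n : ℤ)) {a b : ℤ}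
    (h : a ≡ b [ZMOD n]) : (m : ℤ) ∣ a ↔ (m : ℤ) ∣ b := by
  have hd : (m : ℤ) ∣ b - a := hm.trans h.dvd
  constructor <;> intro h1
  · simpa using dvd_add hd h1
  · simpa using dvd_sub h1 hd

theorem stmt_9 (q n v : ℕ) (hq : IsPrimePow q) [NeZero n] (hcop : Nat.Coprime n q)
    (hv : v ∣ n) (hv0 : 0 < v) (hvn : v < n)
    (Fq : Type*) [Field Fq] [Fintype Fq] (hcard : Fintype.card Fq = q)
    (K : Type*) [Field K] [Algebra Fq K]
    (lam α : Fq) (hlam : lam ≠ 0) (hα : α ≠ 0)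
    (ξ β : K) (hξ : IsPrimitiveRoot ξ n) (hβ : β ^ n = algebraMap Fq K lam)
    (p : Fq[X]) (hp : p = ∑ i ∈ Finset.range (n / v), C (α ^ i) * X ^ (i * v))
    (hpdvd : p ∣ X ^ n - C lam) :
    {k : ZMod n | aeval (ξ ^ k.val * β) p ≠ 0}
        = {k : ZMod n | ξ ^ (k.val * v) = (algebraMap Fq K α)⁻¹ * (β ^ v)⁻¹} ∧
      ∃ c : ZMod n, {k : ZMod n | aeval (ξ ^ k.val * β) p ≠ 0}
        = (fun x => c + x) '' (AddSubgroup.zmultiples ((n / v : ℕ) : ZMod n) : Set (ZMod n)) := by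
  classical
  have hn : 0 < n := Nat.pos_of_ne_zero (NeZero.ne n)
  set φ := algebraMap Fq K with hφ
  have hφinj : Function.Injective φ := (algebraMap Fq K).injective
  set m := n / v with hm
  have hmv : m * v = n := Nat.div_mul_cancel hv
  have hm1 : 1 < m := by
    by_contra h
    push_neg at h
    have : m * v ≤ 1 * v := Nat.mul_le_mul_right v h
    omega
  have hLK : φ lam ≠ 0 := fun h => hlam (by
    apply hφinj; simpa using h)
  have hβ0 : β ≠ 0 := by
    intro h
    apply hLK
    rw [← hβ, h, zero_pow hn.ne']
  have hA0 : φ α ≠ 0 := fun h => hα (by apply hφinj; simpa using h)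
  have hξ0 : ξ ≠ 0 := by
    intro h
    have := hξ.pow_eq_one
    rw [h, zero_pow hn.ne'] at this
    exact zero_ne_one this
  -- evaluation formula
  have heval : ∀ x : K, aeval x p = ∑ i ∈ Finset.range m, (φ α * x ^ v) ^ i := by
    intro x
    rw [hp, map_sum]
    refine Finset.sum_congr rfl fun i _ => ?_
    rw [map_mul, aeval_C, ← hφ, map_pow, aeval_X_pow, mul_pow, mul_comm i v, pow_mul]
  have hid : ∀ x : K, (φ α * x ^ v - 1) * aeval x p = (φ α) ^ m * x ^ n - 1 := by
    intro x
    rw [heval x, mul_comm, geom_sum_mul, mul_pow, ← pow_mul, mul_comm v m, hmv]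
  have hfn : ∀ k : ℕ, (ξ ^ k * β) ^ n = φ lam := by
    intro k
    rw [mul_pow, ← pow_mul, mul_comm k n, pow_mul, hξ.pow_eq_one, one_pow, one_mul, hβ]
  -- degree bound
  have hXC : (X ^ n - C lam : Fq[X]) ≠ 0 := X_pow_sub_C_ne_zero hn lam
  have hcoeff : p.coeff ((m - 1) * v) = α ^ (m - 1) := by
    rw [hp, finset_sum_coeff]
    rw [Finset.sum_eq_single (m - 1)]
    · rw [coeff_C_mul, coeff_X_pow, if_pos rfl, mul_one]
    · intro i _ hne
      rw [coeff_C_mul, coeff_X_pow, if_neg, mul_zero]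
      intro h
      exact hne (Nat.eq_of_mul_eq_mul_right hv0 h.symm)
    · intro h
      exact absurd (Finset.mem_range.mpr (by omega)) h
  have hpdeg : (m - 1) * v ≤ p.natDegree :=
    le_natDegree_of_ne_zero (by rw [hcoeff]; exact pow_ne_zero _ hα)
  -- key constant
  have hc : (φ α) ^ m * φ lam = 1 := by
    by_contra hc'
    obtain ⟨g, hg⟩ := hpdvd
    set P := p.map φ with hP
    set G := g.map φ with hG
    have hPG : (X ^ n - C (φ lam) : K[X]) = P * G := by
      have := congrArg (Polynomial.map φ) hg
      simpa [Polynomial.map_mul] using this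
    have hXK : (X ^ n - C (φ lam) : K[X]) ≠ 0 := X_pow_sub_C_ne_zero hn _
    have hP0 : P ≠ 0 := by
      intro h
      rw [h, zero_mul] at hPG
      exact hXK hPG
    have hG0 : G ≠ 0 := by
      intro h
      rw [h, mul_zero] at hPG
      exact hXK hPG
    have hdegP : P.natDegree = p.natDegree := natDegree_map_eq_of_injective hφinj p
    have hsum : P.natDegree + G.natDegree = n := by
      rw [← natDegree_mul hP0 hG0, ← hPG, natDegree_X_pow_sub_C]
    have hmv' : (m - 1) * v = n - v := by
      rw [Nat.sub_mul, one_mul, hmv]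
    have hdegG : G.natDegree ≤ v := by omega
    have hGroot : ∀ k < n, G.eval (ξ ^ k * β) = 0 := by
      intro k _
      have h1 : P.eval (ξ ^ k * β) * G.eval (ξ ^ k * β) = 0 := by
        rw [← eval_mul, ← hPG]
        simp [hfn k]
      have hPa : P.eval (ξ ^ k * β) = aeval (ξ ^ k * β) p := by
        rw [hP, eval_map, aeval_def]
      have h2 : P.eval (ξ ^ k * β) ≠ 0 := by
        have h3 := hid (ξ ^ k * β)
        rw [hfn k] at h3
        have h4 : (φ α * (ξ ^ k * β) ^ v - 1) * aeval (ξ ^ k * β) p ≠ 0 := by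
          rw [h3]
          exact sub_ne_zero.mpr hc'
        rw [hPa]
        exact right_ne_zero_of_mul h4
      exact (mul_eq_zero.mp h1).resolve_left h2
    have hinj : Set.InjOn (fun k : ℕ => ξ ^ k * β) (Finset.range n) := by
      intro a ha b hb hab
      exact hξ.pow_inj (Finset.mem_range.mp ha) (Finset.mem_range.mp hb)
        (mul_right_cancel₀ hβ0 hab)
    have hsub : (Finset.range n).image (fun k => ξ ^ k * β) ⊆ G.roots.toFinset := by
      intro z hz
      obtain ⟨k, hk, rfl⟩ := Finset.mem_image.mp hz
      rw [Multiset.mem_toFinset, mem_roots hG0]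
      exact hGroot k (Finset.mem_range.mp hk)
    have hcard2 := Finset.card_le_card hsub
    rw [Finset.card_image_of_injOn hinj, Finset.card_range] at hcard2
    have h5 := (G.roots.toFinset_card_le).trans (G.card_roots')
    omega
  -- (m : K) ≠ 0
  have hmK : (m : K) ≠ 0 := by
    intro h
    haveI : CharP K (ringChar Fq) := charP_of_injective_algebraMap hφinj (ringChar Fq)
    have h1 : ringChar Fq ∣ m := (CharP.cast_eq_zero_iff K (ringChar Fq) m).mp h
    have h2 : ringChar Fq ∣ q := by
      have hq0 : ((q : ℕ) : Fq) = 0 := by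
        rw [← hcard]
        exact FiniteField.cast_card_eq_zero Fq
      exact (CharP.cast_eq_zero_iff Fq (ringChar Fq) q).mp hq0
    have h3 : ringChar Fq ∣ n := h1.trans (Nat.div_dvd_of_dvd hv)
    have h4 : ringChar Fq = 1 := Nat.dvd_one.mp (hcop ▸ Nat.dvd_gcd h3 h2)
    exact CharP.ringChar_ne_one h4
  -- key iff
  have hkey : ∀ k : ℕ, aeval (ξ ^ k * β) p ≠ 0 ↔ φ α * (ξ ^ k * β) ^ v = 1 := by
    intro k
    constructor
    · intro h
      by_contra hne
      apply h
      have h3 := hid (ξ ^ k * β)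
      rw [hfn k, hc, sub_self] at h3
      exact (mul_eq_zero.mp h3).resolve_left (sub_ne_zero.mpr hne)
    · intro h1
      rw [heval]
      simp only [h1, one_pow, Finset.sum_const, Finset.card_range, nsmul_eq_mul, mul_one]
      exact hmK
  have hcond : ∀ k : ℕ, (φ α * (ξ ^ k * β) ^ v = 1) ↔ ξ ^ (k * v) = (φ α)⁻¹ * (β ^ v)⁻¹ := by
    intro k
    have hb : (β : K) ^ v ≠ 0 := pow_ne_zero _ hβ0
    rw [mul_pow, ← pow_mul]
    constructor
    · intro h
      rw [← mul_inv]
      refine eq_inv_of_mul_eq_one_left ?_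
      calc ξ ^ (k * v) * (φ α * β ^ v) = φ α * (ξ ^ (k * v) * β ^ v) := by ring
      _ = 1 := h
    · intro h
      rw [h]
      field_simp
  have hmain : {k : ZMod n | aeval (ξ ^ k.val * β) p ≠ 0}
      = {k : ZMod n | ξ ^ (k.val * v) = (algebraMap Fq K α)⁻¹ * (β ^ v)⁻¹} := by
    ext k
    simp only [Set.mem_setOf_eq]
    rw [hkey k.val, hcond k.val]
  refine ⟨hmain, ?_⟩
  -- coset part
  have hw : ((φ α)⁻¹ * (β ^ v)⁻¹) ^ m = 1 := by
    have h1 : (φ α * β ^ v) ^ m = 1 := by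
      rw [mul_pow, ← pow_mul, mul_comm v m, hmv, hβ, hc]
    rw [← mul_inv, inv_pow, h1, inv_one]
  haveI : NeZero m := ⟨by omega⟩
  have hprim : IsPrimitiveRoot (ξ ^ v) m := hξ.pow hn (by rw [mul_comm, hmv])
  obtain ⟨j, hj, hjw⟩ := hprim.eq_pow_of_pow_eq_one hw
  refine ⟨(j : ZMod n), ?_⟩
  rw [hmain]
  have hpoweq : ∀ a b : ℕ, (ξ ^ a = ξ ^ b ↔ (n : ℤ) ∣ (a : ℤ) - b) := by
    intro a b
    rw [← hξ.zpow_eq_one_iff_dvd, zpow_sub₀ hξ0, zpow_natCast, zpow_natCast,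
      div_eq_one_iff_eq (pow_ne_zero b hξ0)]
  have hmdvdn : (m : ℤ) ∣ (n : ℤ) := Int.natCast_dvd_natCast.mpr (Nat.div_dvd_of_dvd hv)
  ext k
  simp only [Set.mem_setOf_eq, Set.mem_image, SetLike.mem_coe]
  rw [← hjw, ← pow_mul, hpoweq]
  have e1 : (((k - (j : ZMod n)).val : ℤ)) ≡ (k.val : ℤ) - j [ZMOD n] := by
    rw [← ZMod.intCast_eq_intCast_iff]
    push_cast
    simp [ZMod.natCast_val, ZMod.cast_id]
  constructor
  · intro hdvd
    refine ⟨k - (j : ZMod n), ?_, by ring⟩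
    rw [aux_mem_zmultiples (Nat.div_dvd_of_dvd hv),
      aux_dvd_iff_of_modEq hmdvdn e1]
    -- need (m:ℤ) ∣ k.val - j from (n:ℤ) ∣ k.val*v - v*j
    have h2 : ((m : ℤ) * v) ∣ ((k.val : ℤ) - j) * v := by
      rw [← Int.natCast_mul, hmv]
      convert hdvd using 1
      push_cast
      ring
    exact (mul_dvd_mul_iff_right (by exact_mod_cast hv0.ne' : (v : ℤ) ≠ 0)).mp h2
  · rintro ⟨x, hx, rfl⟩
    rw [aux_mem_zmultiples (Nat.div_dvd_of_dvd hv)] at hx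
    have e2 : ((((j : ZMod n) + x).val : ℤ)) ≡ (j : ℤ) + (x.val : ℤ) [ZMOD n] := by
      rw [← ZMod.intCast_eq_intCast_iff]
      push_cast
      simp [ZMod.natCast_val, ZMod.cast_id]
    -- goal : (n:ℤ) ∣ ((j+x).val * v - v * j)
    have h3 : (m : ℤ) ∣ (((j : ZMod n) + x).val : ℤ) - j := by
      rw [aux_dvd_iff_of_modEq hmdvdn (Int.ModEq.sub e2 (Int.ModEq.refl (j : ℤ)))]
      rw [← hm] at hx
      simpa using hx
    obtain ⟨t, ht⟩ := h3
    have : ((((j : ZMod n) + x).val : ℤ) * v - v * j) = (n : ℤ) * t := by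
      have hn' : (n : ℤ) = (m : ℤ) * v := by rw [← hmv]; push_cast; ring
      rw [hn']
      nlinarith [ht]
    exact ⟨t, by push_cast at this ⊢; linarith [this]⟩
end

section
/- Let C be a λ-constacyclic code of length n over F_q with complete generating set G, and let F_{q^m} be the splitting field of x^n − λ. Then the image of the extended code F_{q^m} ⊗ C under the constacyclic DFT F_{ξ,β} equals V_G = {v ∈ F_{q^m}^n : v_j = 0 for all j ∉ G}. -/
open Polynomial

private lemma coeff_sum_poly' {R : Type*} [CommRing R] (n : ℕ) [NeZero n] (a : ZMod n → R) (k : ℕ) :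
    (∑ i : ZMod n, C (a i) * X ^ i.val).coeff k = if k < n then a (k : ZMod n) else 0 := by
  rw [Polynomial.finset_sum_coeff]
  simp_rw [Polynomial.coeff_C_mul, Polynomial.coeff_X_pow]
  split
  · next h =>
    rw [Finset.sum_eq_single ((k : ZMod n))]
    · simp [ZMod.val_cast_of_lt h]
    · intro i _ hne
      have hv : i.val ≠ k := by
        intro hv
        apply hne
        rw [← hv, ZMod.natCast_val, ZMod.cast_id]
      simp [Ne.symm hv]
    · simp
  · next h =>
    apply Finset.sum_eq_zero
    intro i _
    have hv : i.val ≠ k := fun hv => h (hv ▸ i.val_lt)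
    simp [Ne.symm hv]

private lemma degree_sum_poly' {R : Type*} [CommRing R] (n : ℕ) [NeZero n] (a : ZMod n → R) :
    (∑ i : ZMod n, C (a i) * X ^ i.val).degree < (n : WithBot ℕ) := by
  apply lt_of_le_of_lt (Polynomial.degree_sum_le _ _)
  rw [Finset.sup_lt_iff (by exact_mod_cast WithBot.bot_lt_coe n : (⊥ : WithBot ℕ) < (n : WithBot ℕ))]
  intro i _
  apply lt_of_le_of_lt (Polynomial.degree_C_mul_X_pow_le _ _)
  exact_mod_cast i.val_lt

private lemma reconstruct_poly' {R : Type*} [CommRing R] (n : ℕ) [NeZero n] (p : R[X])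
    (hp : p.degree < (n : WithBot ℕ)) :
    ∑ i : ZMod n, C (p.coeff i.val) * X ^ i.val = p := by
  ext k
  rw [coeff_sum_poly']
  split
  · next h => rw [ZMod.val_cast_of_lt h]
  · next h =>
    refine (Polynomial.coeff_eq_zero_of_degree_lt (lt_of_lt_of_le hp ?_)).symm
    exact_mod_cast not_lt.1 h

private lemma eval_sum_poly' {R : Type*} [CommRing R] (n : ℕ) [NeZero n] (a : ZMod n → R) (x : R) :
    (∑ i : ZMod n, C (a i) * X ^ i.val).eval x = ∑ i : ZMod n, a i * x ^ i.val := by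
  rw [Polynomial.eval_finset_sum]
  simp

theorem stmt_11 (q n : ℕ) (hq : IsPrimePow q) [NeZero n] (hcop : Nat.Coprime n q)
    (Fq : Type*) [Field Fq] [Fintype Fq] (hcard : Fintype.card Fq = q)
    (K : Type*) [Field K] [Algebra Fq K]
    (lam : Fq) (hlam : lam ≠ 0)
    (ξ β : K) (hξ : IsPrimitiveRoot ξ n) (hβ : β ^ n = algebraMap Fq K lam)
    (hsplit : Polynomial.Splits ((X ^ n - C lam).map (algebraMap Fq K)))
    (g : Fq[X]) (hg : g.Monic) (hgdvd : g ∣ X ^ n - C lam)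
    (Code : Set (ZMod n → Fq))
    (hCode : Code = {v | g ∣ ∑ i : ZMod n, C (v i) * X ^ i.val})
    (G : Set (ZMod n)) (hG : G = {i | aeval (ξ ^ i.val * β) g ≠ 0})
    (F : (ZMod n → K) → (ZMod n → K))
    (hF : ∀ a j, F a j = ∑ i : ZMod n, a i * (ξ ^ j.val * β) ^ i.val) :
    F '' (Submodule.span K ((fun (v : ZMod n → Fq) (i : ZMod n) =>
          algebraMap Fq K (v i)) '' Code) : Set (ZMod n → K))
      = {v : ZMod n → K | ∀ j ∉ G, v j = 0} := by
  classical
  have hn0 : 0 < n := Nat.pos_of_ne_zero (NeZero.ne n)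
  set A := algebraMap Fq K with hA
  have hAinj : Function.Injective A := (algebraMap Fq K).injective
  set e : ZMod n → K := fun j => ξ ^ j.val * β with he
  -- basic nonvanishing facts
  have hβ0 : β ≠ 0 := by
    intro h
    apply hlam
    apply hAinj
    rw [← hβ, h, map_zero, zero_pow hn0.ne']
  have heinj : Function.Injective e := by
    intro i j hij
    have h1 : ξ ^ i.val = ξ ^ j.val := mul_right_cancel₀ hβ0 hij
    have := hξ.pow_inj i.val_lt j.val_lt h1
    exact ZMod.val_injective n this
  -- characteristic facts
  obtain ⟨nn, hpprime, hqpow⟩ := FiniteField.card Fq (ringChar Fq)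
  rw [hcard] at hqpow
  have hpdvdq : ringChar Fq ∣ q := hqpow ▸ dvd_pow_self _ (by exact_mod_cast nn.ne_zero)
  have hnFq : (n : Fq) ≠ 0 := by
    rw [Ne, CharP.cast_eq_zero_iff Fq (ringChar Fq) n]
    intro hdvd
    have : ringChar Fq ∣ Nat.gcd n q := Nat.dvd_gcd hdvd hpdvdq
    rw [hcop] at this
    exact hpprime.ne_one (Nat.dvd_one.1 this)
  have hnK : ((n : ℕ) : K) ≠ 0 := by
    intro h
    apply hnFq
    apply hAinj
    rw [map_natCast, h, map_zero]
  -- the polynomial over K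
  set gK : K[X] := g.map A with hgK
  have hgK0 : gK ≠ 0 := (hg.map A).ne_zero
  have hXnl : (X ^ n - C lam).map A = X ^ n - C (A lam) := by
    simp [Polynomial.map_sub, Polynomial.map_pow]
  have hgKdvd : gK ∣ X ^ n - C (A lam) := by
    rw [← hXnl]; exact Polynomial.map_dvd A hgdvd
  have hAlam0 : A lam ≠ 0 := fun h => hlam (hAinj (by rw [h, map_zero]))
  have hsep : (X ^ n - C (A lam)).Separable := Polynomial.separable_X_pow_sub_C _ hnK hAlam0
  have hsepgK : gK.Separable := hsep.of_dvd hgKdvd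
  have hgKsplits : gK.Splits := by
    rw [hgK]
    exact hsplit.of_dvd (Polynomial.map_ne_zero (Polynomial.X_pow_sub_C_ne_zero hn0 lam))
      (Polynomial.map_dvd A hgdvd)
  -- every root of gK is of the form e j with j ∉ G
  have haeval : ∀ x : K, aeval x g = gK.eval x := by
    intro x; rw [Polynomial.aeval_def, ← Polynomial.eval_map]
  have hrootE : ∀ r ∈ gK.roots, ∃ j : ZMod n, j ∉ G ∧ e j = r := by
    intro r hr
    have hr0 : gK.eval r = 0 := Polynomial.isRoot_of_mem_roots hr
    have hrn : r ^ n = A lam := by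
      obtain ⟨t, ht⟩ := hgKdvd
      have h2 : (X ^ n - C (A lam)).eval r = 0 := by
        rw [ht, Polynomial.eval_mul, hr0, zero_mul]
      rw [Polynomial.eval_sub, Polynomial.eval_pow, Polynomial.eval_X, Polynomial.eval_C,
        sub_eq_zero] at h2
      exact h2
    have hq1 : (r * β⁻¹) ^ n = 1 := by
      rw [mul_pow, hrn, inv_pow, ← hβ]
      field_simp
    obtain ⟨i, hi, hξi⟩ := hξ.eq_pow_of_pow_eq_one hq1
    have hej : e (i : ZMod n) = r := by
      show ξ ^ ((i : ZMod n)).val * β = r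
      rw [ZMod.val_cast_of_lt hi, hξi]
      field_simp
    refine ⟨(i : ZMod n), ?_, hej⟩
    rw [hG]
    simp only [Set.mem_setOf_eq, not_not, ne_eq]
    rw [show ξ ^ ((i : ZMod n)).val * β = e (i : ZMod n) from rfl, haeval, hej]
    exact hr0
  -- divisibility criterion
  have hdvd_of_vanish : ∀ f : K[X], (∀ j ∉ G, f.eval (e j) = 0) → gK ∣ f := by
    intro f hf
    by_cases hf0 : f = 0
    · simp [hf0]
    refine hgKsplits.dvd_of_roots_le_roots hgK0 ?_
    rw [Multiset.le_iff_count]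
    intro r
    by_cases hr : r ∈ gK.roots
    · rw [Multiset.count_eq_one_of_mem (Polynomial.nodup_roots hsepgK) hr]
      rw [Nat.succ_le_iff, Multiset.count_pos]
      obtain ⟨j, hjG, hej⟩ := hrootE r hr
      rw [Polynomial.mem_roots hf0]
      show f.IsRoot r
      rw [Polynomial.IsRoot, ← hej]
      exact hf j hjG
    · rw [Multiset.count_eq_zero_of_notMem hr]
      exact Nat.zero_le _
  -- the linear map
  let Flin : (ZMod n → K) →ₗ[K] (ZMod n → K) :=
    { toFun := fun a j => ∑ i : ZMod n, a i * (e j) ^ i.val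
      map_add' := fun a b => by
        funext j; simp [add_mul, Finset.sum_add_distrib]
      map_smul' := fun c a => by
        funext j; simp [Finset.mul_sum, mul_assoc] }
  have hFeq : F = ⇑Flin := by
    funext a j; rw [hF]; rfl
  let VG : Submodule K (ZMod n → K) := Submodule.pi {j | j ∉ G} (fun _ => ⊥)
  have hVG : {v : ZMod n → K | ∀ j ∉ G, v j = 0} = ↑VG := by
    ext v
    simp only [VG, Submodule.mem_pi, Submodule.mem_bot, Set.mem_setOf_eq, SetLike.mem_coe]
  set S : Set (ZMod n → K) :=
    (fun (v : ZMod n → Fq) (i : ZMod n) => A (v i)) '' Code with hS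
  rw [hFeq, hVG, ← Submodule.map_coe]
  suffices hsub : Submodule.map Flin (Submodule.span K S) = VG by rw [hsub]
  rw [Submodule.map_span]
  apply le_antisymm
  · rw [Submodule.span_le]
    rintro x ⟨y, ⟨v, hv, rfl⟩, rfl⟩
    rw [hCode] at hv
    intro j hj
    simp only [Set.mem_setOf_eq] at hj
    show Flin (fun i => A (v i)) j ∈ (⊥ : Submodule K K)
    rw [Submodule.mem_bot]
    show ∑ i : ZMod n, A (v i) * (e j) ^ i.val = 0
    have hmap : ((∑ i : ZMod n, C (v i) * X ^ i.val).map A)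
        = ∑ i : ZMod n, C (A (v i)) * X ^ i.val := by
      rw [Polynomial.map_sum]
      simp [Polynomial.map_pow]
    rw [← eval_sum_poly', ← hmap]
    obtain ⟨t, ht⟩ := hv
    have hgj : gK.eval (e j) = 0 := by
      rw [← haeval]
      rw [hG] at hj
      simpa using hj
    rw [ht, Polynomial.map_mul, Polynomial.eval_mul, ← hgK, hgj, zero_mul]
  · -- VG ≤ span
    intro v hv
    have hv' : ∀ j ∉ G, v j = 0 := by
      intro j hj
      exact (Submodule.mem_bot K).1 (hv j hj)
    set f : K[X] := Lagrange.interpolate Finset.univ e v with hf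
    have hinjOn : Set.InjOn e ↑(Finset.univ : Finset (ZMod n)) := heinj.injOn
    have hdegf : f.degree < (n : WithBot ℕ) := by
      have h1 := Lagrange.degree_interpolate_lt v hinjOn
      rwa [Finset.card_univ, ZMod.card] at h1
    have hevalf : ∀ j, f.eval (e j) = v j := fun j =>
      Lagrange.eval_interpolate_at_node v hinjOn (Finset.mem_univ j)
    have hgKf : gK ∣ f := hdvd_of_vanish f (fun j hj => by rw [hevalf j, hv' j hj])
    obtain ⟨h, hfh⟩ := hgKf
    by_cases hh0 : h = 0
    · have hv0 : v = 0 := by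
        funext j
        rw [← hevalf j, hfh, hh0, mul_zero, Polynomial.eval_zero, Pi.zero_apply]
      rw [hv0]
      exact Submodule.zero_mem _
    · set a : ZMod n → K := fun i => f.coeff i.val with ha
      have hFa : Flin a = v := by
        funext j
        show ∑ i : ZMod n, f.coeff i.val * (e j) ^ i.val = v j
        rw [← eval_sum_poly' n (fun i => f.coeff i.val), reconstruct_poly' n f hdegf, hevalf]
      have hfne : f ≠ 0 := hfh ▸ mul_ne_zero hgK0 hh0
      have hndf : f.natDegree < n := (Polynomial.natDegree_lt_iff_degree_lt hfne).2 hdegf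
      have hndgK : gK.natDegree = g.natDegree :=
        Polynomial.natDegree_map_eq_of_injective hAinj g
      have hdegk : ∀ k ∈ h.support, (g * X ^ k).degree < (n : WithBot ℕ) := by
        intro k hk
        have hk' : k ≤ h.natDegree := Polynomial.le_natDegree_of_mem_supp k hk
        have hne : g * X ^ k ≠ 0 := mul_ne_zero hg.ne_zero (pow_ne_zero _ Polynomial.X_ne_zero)
        rw [← Polynomial.natDegree_lt_iff_degree_lt hne]
        have h1 : (g * X ^ k).natDegree = g.natDegree + k := by
          rw [Polynomial.natDegree_mul hg.ne_zero (pow_ne_zero _ Polynomial.X_ne_zero),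
            Polynomial.natDegree_X_pow]
        have h2 : f.natDegree = g.natDegree + h.natDegree := by
          rw [hfh, Polynomial.natDegree_mul hgK0 hh0, hndgK]
        omega
      have hwk : ∀ k ∈ h.support, (fun i : ZMod n => (g * X ^ k).coeff i.val) ∈ Code := by
        intro k hk
        have hdut : g ∣ ∑ i : ZMod n, C ((g * X ^ k).coeff i.val) * X ^ i.val := by
          rw [reconstruct_poly' n _ (hdegk k hk)]
          exact dvd_mul_right _ _
        rw [hCode]
        exact hdut
      have hsum : a = ∑ k ∈ h.support,
          h.coeff k • (fun i : ZMod n => A ((g * X ^ k).coeff i.val)) := by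
        funext i
        have h1 : f.coeff i.val = ∑ k ∈ h.support, h.coeff k * A ((g * X ^ k).coeff i.val) := by
          have h2 : f = ∑ k ∈ h.support, C (h.coeff k) * (gK * X ^ k) := by
            rw [hfh]
            conv_lhs => rw [h.as_sum_support_C_mul_X_pow]
            rw [Finset.mul_sum]
            exact Finset.sum_congr rfl fun k _ => by ring
          rw [h2, Polynomial.finset_sum_coeff]
          exact Finset.sum_congr rfl fun k _ => by
            rw [Polynomial.coeff_C_mul, show gK * X ^ k = (g * X ^ k).map A by
                  rw [Polynomial.map_mul, Polynomial.map_pow, Polynomial.map_X],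
              Polynomial.coeff_map]
        show f.coeff i.val = _
        rw [h1]
        simp
      have haS : a ∈ Submodule.span K S := by
        rw [hsum]
        apply Submodule.sum_mem
        intro k hk
        apply Submodule.smul_mem
        apply Submodule.subset_span
        exact ⟨_, hwk k hk, rfl⟩
      rw [← hFa, ← Submodule.map_span]
      exact Submodule.mem_map_of_mem haS
end

section
/- Let C be a λ-constacyclic code of length n over F_q with pattern polynomial p(x) = Σ_{i=0}^{n/v − 1} α^i x^{iv} dividing its generator g(x), where v | n is minimal. Then every codeword of C has the form (c | αc | α²c | ... | α^{n/v −1} c) for some c ∈ F_q^v in the core code, and consequently every codeword of the t-th Schur power C^{∘t} has the form (c | α^t c | α^{2t} c | ... | α^{t(n/v−1)} c) with c in the t-th Schur power of the core code. -/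
open Polynomial

/-- The `t`-th Schur power of a set of vectors: the span of all componentwise
products of `t` elements of the set. -/
def schurPow {Fq : Type*} [Field Fq] {ι : Type*} (Code : Set (ι → Fq)) (t : ℕ) :
    Submodule Fq (ι → Fq) :=
  Submodule.span Fq {w | ∃ c : Fin t → (ι → Fq), (∀ s, c s ∈ Code) ∧
    w = fun i => ∏ s, c s i}

theorem stmt_13 (q n v : ℕ) (hq : IsPrimePow q) [NeZero n] (hcop : Nat.Coprime n q)
    (hv : v ∣ n) (hv0 : 0 < v)
    (Fq : Type*) [Field Fq] [Fintype Fq] (hcard : Fintype.card Fq = q)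
    (lam α : Fq) (hlam : lam ≠ 0) (hα : α ≠ 0)
    (g : Fq[X]) (hg : g.Monic) (hgdvd : g ∣ X ^ n - C lam)
    (p : Fq[X]) (hp : p = ∑ i ∈ Finset.range (n / v), C (α ^ i) * X ^ (i * v))
    (hpg : p ∣ g)
    (hmin : ∀ (v' : ℕ) (α' : Fq), v' ∣ n → 0 < v' →
      (∑ i ∈ Finset.range (n / v'), C (α' ^ i) * X ^ (i * v')) ∣ g → v ≤ v')
    (Code : Set (ZMod n → Fq))
    (hCode : Code = {w | g ∣ ∑ i : ZMod n, C (w i) * X ^ i.val})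
    (Core : Set (Fin v → Fq))
    (hCore : Core = {c | (fun i : ZMod n =>
        α ^ (i.val / v) * c ⟨i.val % v, Nat.mod_lt _ hv0⟩) ∈ Code}) :
    (∀ w ∈ Code, ∃ c ∈ Core, ∀ i : ZMod n,
        w i = α ^ (i.val / v) * c ⟨i.val % v, Nat.mod_lt _ hv0⟩) ∧
      ∀ (t : ℕ), 0 < t → ∀ w ∈ schurPow Code t, ∃ c ∈ schurPow Core t,
        ∀ i : ZMod n, w i = α ^ (t * (i.val / v)) * c ⟨i.val % v, Nat.mod_lt _ hv0⟩ := by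
  have hn : 0 < n := Nat.pos_of_ne_zero (NeZero.ne n)
  have hvn : v ≤ n := Nat.le_of_dvd hn hv
  have hnv : 0 < n / v := Nat.div_pos hvn hv0
  have hmulv : n / v * v = n := Nat.div_mul_cancel hv
  -- coefficient of p at (n - v)
  have hnv1 : (n / v - 1) * v = n - v := by
    rw [Nat.sub_mul, one_mul, hmulv]
  have hpcoeff : p.coeff (n - v) = α ^ (n / v - 1) := by
    rw [hp, Polynomial.finset_sum_coeff]
    rw [Finset.sum_eq_single (n / v - 1)]
    · rw [coeff_C_mul, coeff_X_pow, if_pos hnv1.symm, mul_one]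
    · intro i hi hne
      rw [coeff_C_mul, coeff_X_pow, if_neg, mul_zero]
      intro h
      exact hne (Nat.eq_of_mul_eq_mul_right hv0 (by rw [hnv1, ← h]))
    · intro h
      exact absurd (Finset.mem_range.2 (by omega)) h
  have hp0 : p ≠ 0 := by
    intro h
    rw [h, Polynomial.coeff_zero] at hpcoeff
    exact pow_ne_zero _ hα hpcoeff.symm
  have hdegle : p.degree ≤ (n - v : ℕ) := by
    rw [hp]
    refine (Polynomial.degree_sum_le _ _).trans ?_
    rw [Finset.sup_le_iff]
    intro i hi
    refine (Polynomial.degree_C_mul_X_pow_le _ _).trans ?_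
    have hi' : i < n / v := Finset.mem_range.1 hi
    have : i * v ≤ n - v := by
      calc i * v ≤ (n / v - 1) * v := Nat.mul_le_mul_right v (by omega)
      _ = n - v := hnv1
    exact_mod_cast this
  have hndeg : p.natDegree = n - v :=
    le_antisymm (Polynomial.natDegree_le_iff_degree_le.2 hdegle)
      (Polynomial.le_natDegree_of_ne_zero (hpcoeff ▸ pow_ne_zero _ hα))
  -- key: coefficients of p * r
  have key : ∀ r : Fq[X], (∀ k, v ≤ k → r.coeff k = 0) → ∀ m, m < n →
      (p * r).coeff m = α ^ (m / v) * r.coeff (m % v) := by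
    intro r hr m hm
    have hrw : p * r = ∑ i ∈ Finset.range (n / v), C (α ^ i) * (r * X ^ (i * v)) := by
      rw [hp, Finset.sum_mul]
      exact Finset.sum_congr rfl fun i _ => by ring
    have hmem : m / v ∈ Finset.range (n / v) := by
      rw [Finset.mem_range, Nat.div_lt_iff_lt_mul hv0, hmulv]
      exact hm
    rw [hrw, Polynomial.finset_sum_coeff, Finset.sum_eq_single (m / v)]
    · rw [coeff_C_mul, coeff_mul_X_pow', if_pos (Nat.div_mul_le_self m v)]
      have hmv : m - m / v * v = m % v := by
        have h1 := Nat.mod_add_div m v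
        have h2 : m / v * v = v * (m / v) := Nat.mul_comm _ _
        omega
      rw [hmv]
    · intro i hi hne
      rw [coeff_C_mul, coeff_mul_X_pow']
      rcases le_or_gt (i * v) m with h | h
      · rw [if_pos h, hr, mul_zero]
        have h1 : i < m / v := lt_of_le_of_ne ((Nat.le_div_iff_mul_le hv0).2 h) hne
        have h2 : i * v + v ≤ m := by
          have := Nat.mul_le_mul_right v (Nat.succ_le_of_lt h1)
          have := Nat.div_mul_le_self m v
          calc i * v + v = (i + 1) * v := by ring
          _ ≤ m / v * v := Nat.mul_le_mul_right v (Nat.succ_le_of_lt h1)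
          _ ≤ m := Nat.div_mul_le_self m v
        omega
      · rw [if_neg (not_le.2 h), mul_zero]
    · intro h
      exact absurd hmem h
  -- coefficients of the word polynomial
  have coeffW : ∀ (w : ZMod n → Fq) (m : ℕ), m < n →
      (∑ i : ZMod n, C (w i) * X ^ i.val).coeff m = w ((m : ZMod n)) := by
    intro w m hm
    rw [Polynomial.finset_sum_coeff, Finset.sum_eq_single ((m : ZMod n))]
    · rw [coeff_C_mul, coeff_X_pow, if_pos (ZMod.val_cast_of_lt hm).symm, mul_one]
    · intro i _ hne
      rw [coeff_C_mul, coeff_X_pow, if_neg, mul_zero]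
      intro h
      exact hne (by rw [h, ZMod.natCast_val, ZMod.cast_id])
    · intro h
      exact absurd (Finset.mem_univ _) h
  have degW : ∀ w : ZMod n → Fq,
      (∑ i : ZMod n, C (w i) * X ^ i.val).degree < (n : WithBot ℕ) := by
    intro w
    refine lt_of_le_of_lt (Polynomial.degree_sum_le _ _) ?_
    rw [Finset.sup_lt_iff (by exact_mod_cast WithBot.bot_lt_coe n)]
    intro i _
    refine lt_of_le_of_lt (Polynomial.degree_C_mul_X_pow_le _ _) ?_
    exact_mod_cast ZMod.val_lt i
  -- main structural fact
  have main : ∀ w ∈ Code, ∀ i : ZMod n,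
      w i = α ^ (i.val / v) * w (((i.val % v : ℕ) : ZMod n)) := by
    intro w hw i
    rw [hCode, Set.mem_setOf_eq] at hw
    obtain ⟨r, hr⟩ := dvd_trans hpg hw
    have hrcoeff : ∀ k, v ≤ k → r.coeff k = 0 := by
      rcases eq_or_ne r 0 with rfl | hr0
      · simp
      intro k hk
      apply Polynomial.coeff_eq_zero_of_natDegree_lt
      have hW0 : (∑ j : ZMod n, C (w j) * X ^ j.val) ≠ 0 := by
        rw [hr]; exact mul_ne_zero hp0 hr0
      have h1 : (∑ j : ZMod n, C (w j) * X ^ j.val).natDegree < n :=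
        (Polynomial.natDegree_lt_iff_degree_lt hW0).2 (degW w)
      have h2 : (∑ j : ZMod n, C (w j) * X ^ j.val).natDegree
          = (n - v) + r.natDegree := by
        rw [hr, Polynomial.natDegree_mul hp0 hr0, hndeg]
      omega
    have e1 : w i = α ^ (i.val / v) * r.coeff (i.val % v) := by
      have h := coeffW w i.val (ZMod.val_lt i)
      rw [ZMod.natCast_val, ZMod.cast_id] at h
      rw [← h, hr, key r hrcoeff i.val (ZMod.val_lt i)]
    have hlt : i.val % v < n := lt_of_lt_of_le (Nat.mod_lt _ hv0) hvn
    have e2 : w ((i.val % v : ℕ) : ZMod n) = r.coeff (i.val % v) := by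
      have h := coeffW w (i.val % v) hlt
      rw [← h, hr, key r hrcoeff _ hlt, Nat.div_eq_of_lt (Nat.mod_lt _ hv0),
        Nat.mod_eq_of_lt (Nat.mod_lt _ hv0), pow_zero, one_mul]
    rw [e1, e2]
  -- part 1
  have part1 : ∀ w ∈ Code, ∃ c ∈ Core, ∀ i : ZMod n,
      w i = α ^ (i.val / v) * c ⟨i.val % v, Nat.mod_lt _ hv0⟩ := by
    intro w hw
    refine ⟨fun j => w ((j : ℕ) : ZMod n), ?_, fun i => main w hw i⟩
    rw [hCore, Set.mem_setOf_eq]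
    have hc : (fun i : ZMod n => α ^ (i.val / v) *
        (fun j : Fin v => w ((j : ℕ) : ZMod n)) ⟨i.val % v, Nat.mod_lt _ hv0⟩) = w := by
      funext i
      exact (main w hw i).symm
    rw [hc]
    exact hw
  refine ⟨part1, ?_⟩
  intro t ht w hw
  let Φ : (Fin v → Fq) →ₗ[Fq] (ZMod n → Fq) :=
    { toFun := fun c i => α ^ (t * (i.val / v)) * c ⟨i.val % v, Nat.mod_lt _ hv0⟩
      map_add' := fun x y => funext fun i => by simp [mul_add]
      map_smul' := fun m x => funext fun i => by
        simp only [Pi.smul_apply, smul_eq_mul, RingHom.id_apply]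
        ring }
  have hle : schurPow Code t ≤ Submodule.map Φ (schurPow Core t) := by
    apply Submodule.span_le.2
    rintro w ⟨cs, hcs, rfl⟩
    choose ds hdsCore hdsEq using fun s => part1 (cs s) (hcs s)
    refine ⟨fun j => ∏ s, ds s j, Submodule.subset_span ⟨ds, hdsCore, rfl⟩, ?_⟩
    funext i
    show α ^ (t * (i.val / v)) * ∏ s, ds s ⟨i.val % v, Nat.mod_lt _ hv0⟩ = ∏ s, cs s i
    rw [Finset.prod_congr rfl fun s _ => hdsEq s i, Finset.prod_mul_distrib,
      Finset.prod_const, Finset.card_univ, Fintype.card_fin, ← pow_mul, mul_comm (i.val / v) t]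
  obtain ⟨c, hc, hΦc⟩ := hle hw
  exact ⟨c, hc, fun i => by rw [← hΦc]; rfl⟩
end

section
/- Let C₁ and C₂ be constacyclic codes of length n over F_q with dimensions k₁ and k₂. If k₁ + k₂ > n, then the Schur product C₁ ∘ C₂ = F_q^n. -/
open Polynomial

namespace Stmt14Aux

variable {Fq : Type*} [Field Fq] {n : ℕ} [NeZero n]

lemma coeff_sum_vec (v : ZMod n → Fq) (i : ZMod n) :
    (∑ j : ZMod n, C (v j) * X ^ j.val).coeff i.val = v i := by
  rw [finset_sum_coeff]
  rw [Finset.sum_eq_single i]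
  · simp [coeff_X_pow]
  · intro j _ hj
    simp only [coeff_C_mul, coeff_X_pow, mul_ite, mul_one, mul_zero]
    rw [if_neg]
    exact fun h => hj (ZMod.val_injective n h.symm)
  · simp

lemma degree_phi_lt (v : ZMod n → Fq) :
    (∑ j : ZMod n, C (v j) * X ^ j.val).degree < (n : WithBot ℕ) := by
  apply lt_of_le_of_lt (degree_sum_le _ _)
  rw [Finset.sup_lt_iff (by exact_mod_cast WithBot.bot_lt_coe n)]
  intro i _
  exact lt_of_le_of_lt (degree_C_mul_X_pow_le _ _)
    (by exact_mod_cast ZMod.val_lt i)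

lemma natDegree_phi_lt (v : ZMod n → Fq) :
    (∑ j : ZMod n, C (v j) * X ^ j.val).natDegree < n := by
  by_cases h0 : (∑ j : ZMod n, C (v j) * X ^ j.val) = 0
  · simp [h0, Nat.pos_of_ne_zero (NeZero.ne n)]
  · exact (natDegree_lt_iff_degree_lt h0).2 (degree_phi_lt v)

lemma sum_vec_of_coeff (p : Fq[X]) (hp : p.natDegree < n) :
    ∑ i : ZMod n, C (p.coeff i.val) * X ^ i.val = p := by
  conv_rhs => rw [p.as_sum_range' n hp]
  rw [eq_comm]
  refine Finset.sum_bij' (fun (k : ℕ) _ => (k : ZMod n)) (fun (i : ZMod n) _ => i.val)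
    ?_ ?_ ?_ ?_ ?_
  · intros; exact Finset.mem_univ _
  · intro i _; exact Finset.mem_range.2 (ZMod.val_lt i)
  · intro k hk; exact ZMod.val_cast_of_lt (Finset.mem_range.1 hk)
  · intro i _; simp
  · intro k hk
    rw [ZMod.val_cast_of_lt (Finset.mem_range.1 hk), C_mul_X_pow_eq_monomial]

lemma modByMonic_coeff (lam : Fq) (p : Fq[X]) (hp : p.natDegree < 2 * n)
    {i : ℕ} (hi : i < n) :
    (p %ₘ (X ^ n - C lam)).coeff i = p.coeff i + lam * p.coeff (i + n) := by
  have hn : 0 < n := Nat.pos_of_ne_zero (NeZero.ne n)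
  have hmon : (X ^ n - C lam).Monic := monic_X_pow_sub_C lam hn.ne'
  set qq : Fq[X] := ∑ k ∈ Finset.range n, C (p.coeff (k + n)) * X ^ k with hq
  have hqc : ∀ j, qq.coeff j = if j < n then p.coeff (j + n) else 0 := by
    intro j
    rw [hq, finset_sum_coeff]
    simp only [coeff_C_mul, coeff_X_pow, mul_ite, mul_one, mul_zero]
    rw [Finset.sum_ite_eq (Finset.range n) j (fun k => p.coeff (k + n))]
    simp [Finset.mem_range]
  have hco : ∀ m, ((X ^ n - C lam) * qq).coeff m =
      (if n ≤ m then qq.coeff (m - n) else 0) - lam * qq.coeff m := by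
    intro m
    rw [sub_mul, coeff_sub, mul_comm (X ^ n : Fq[X]) qq, coeff_mul_X_pow', coeff_C_mul]
  set r : Fq[X] := p - (X ^ n - C lam) * qq with hr
  have key : p %ₘ (X ^ n - C lam) = r := by
    refine (div_modByMonic_unique qq r hmon ⟨by rw [hr]; ring, ?_⟩).2
    rw [degree_X_pow_sub_C hn]
    rw [degree_lt_iff_coeff_zero]
    intro m hm
    have hm' : n ≤ m := by exact_mod_cast hm
    rw [hr, coeff_sub, hco]
    rw [if_pos hm', hqc, hqc]
    rcases Nat.lt_or_ge (m - n) n with h | h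
    · rw [if_pos h, if_neg (by omega)]
      have : m - n + n = m := by omega
      rw [this]; ring
    · rw [if_neg (by omega), if_neg (by omega)]
      rw [coeff_eq_zero_of_natDegree_lt (by omega)]
      ring
  rw [key, hr, coeff_sub, hco, if_neg (by omega), hqc, if_pos hi]
  ring

lemma shiftVec_apply (g : Fq[X]) (lam : Fq) (hgdeg : g.natDegree < n)
    {j : ℕ} (hj : j < n) (i : ZMod n) :
    ((g * X ^ j) %ₘ (X ^ n - C lam)).coeff i.val =
      if j ≤ i.val then g.coeff (i.val - j) else lam * g.coeff (i.val + n - j) := by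
  have hp2 : (g * X ^ j).natDegree < 2 * n := by
    apply lt_of_le_of_lt (natDegree_mul_le)
    rw [natDegree_X_pow]
    omega
  rw [modByMonic_coeff lam _ hp2 (ZMod.val_lt i)]
  rw [coeff_mul_X_pow', coeff_mul_X_pow']
  rw [if_pos (show j ≤ i.val + n by omega)]
  split_ifs with h
  · rw [coeff_eq_zero_of_natDegree_lt (show g.natDegree < i.val + n - j by omega)]
    ring
  · rw [zero_add]

lemma shiftVec_mem (g : Fq[X]) (lam : Fq) (hgd : g ∣ X ^ n - C lam) (j : ℕ) :
    g ∣ ∑ i : ZMod n, C (((g * X ^ j) %ₘ (X ^ n - C lam)).coeff i.val) * X ^ i.val := by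
  have hn : 0 < n := Nat.pos_of_ne_zero (NeZero.ne n)
  have hmon : (X ^ n - C lam).Monic := monic_X_pow_sub_C lam hn.ne'
  have hdeg : ((g * X ^ j) %ₘ (X ^ n - C lam)).natDegree < n := by
    by_cases h0 : (g * X ^ j) %ₘ (X ^ n - C lam) = 0
    · simp [h0, hn]
    · have := degree_modByMonic_lt (g * X ^ j) hmon
      rw [degree_X_pow_sub_C hn] at this
      exact (natDegree_lt_iff_degree_lt h0).2 this
  rw [sum_vec_of_coeff _ hdeg]
  rw [modByMonic_eq_sub_mul_div _ (X ^ n - C lam)]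
  exact dvd_sub (dvd_mul_right g (X ^ j)) (hgd.mul_right _)

noncomputable def phiL (Fq : Type*) [Field Fq] (n : ℕ) [NeZero n] :
    (ZMod n → Fq) →ₗ[Fq] Fq[X] where
  toFun v := ∑ i : ZMod n, C (v i) * X ^ i.val
  map_add' u v := by
    simp only [Pi.add_apply, map_add, add_mul, Finset.sum_add_distrib]
  map_smul' c v := by
    simp only [Pi.smul_apply, smul_eq_mul, map_mul, RingHom.id_apply, Finset.smul_sum,
      Polynomial.smul_eq_C_mul, mul_assoc]

lemma phiL_injective (Fq : Type*) [Field Fq] (n : ℕ) [NeZero n] :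
    Function.Injective (phiL Fq n) := by
  intro u v h
  funext i
  have h2 : (∑ j : ZMod n, C (u j) * X ^ j.val).coeff i.val
      = (∑ j : ZMod n, C (v j) * X ^ j.val).coeff i.val :=
    congrArg (fun p => Polynomial.coeff p i.val) h
  rwa [coeff_sum_vec, coeff_sum_vec] at h2

lemma rank_bound {g : Fq[X]} (hg : g.Monic) (Co : Submodule Fq (ZMod n → Fq))
    (hCo : (Co : Set (ZMod n → Fq)) = {v | g ∣ ∑ i : ZMod n, C (v i) * X ^ i.val}) :
    Module.finrank Fq Co ≤ n - g.natDegree := by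
  classical
  set d := g.natDegree with hd
  have finLT : Module.Finite Fq (degreeLT Fq (n - d)) :=
    Module.Finite.equiv (degreeLTEquiv Fq (n - d)).symm
  set M := Submodule.map (LinearMap.mulLeft Fq g) (degreeLT Fq (n - d)) with hM
  have finM : Module.Finite Fq M := Module.Finite.map _ _
  have hle : Submodule.map (phiL Fq n) Co ≤ M := by
    rintro p ⟨v, hv, rfl⟩
    have hdvd : g ∣ phiL Fq n v := by
      have : v ∈ {v : ZMod n → Fq | g ∣ ∑ i : ZMod n, C (v i) * X ^ i.val} := hCo ▸ hv
      exact this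
    have heq : g * (phiL Fq n v /ₘ g) = phiL Fq n v := by
      have h0 := modByMonic_add_div (phiL Fq n v) g
      rw [(modByMonic_eq_zero_iff_dvd hg).2 hdvd, zero_add] at h0
      exact h0
    refine ⟨phiL Fq n v /ₘ g, ?_, heq⟩
    rw [SetLike.mem_coe, mem_degreeLT]
    by_cases h0 : phiL Fq n v = 0
    · rw [show phiL Fq n v /ₘ g = 0 by rw [h0, zero_divByMonic], degree_zero]
      exact WithBot.bot_lt_coe _
    · have hq0 : phiL Fq n v /ₘ g ≠ 0 := by
        intro h; apply h0; rw [← heq, h, mul_zero]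
      have hnd : (phiL Fq n v).natDegree < n := natDegree_phi_lt v
      have hdle : d ≤ (phiL Fq n v).natDegree := natDegree_le_of_dvd hdvd h0
      have h1 : (phiL Fq n v /ₘ g).natDegree = (phiL Fq n v).natDegree - d :=
        natDegree_divByMonic _ hg
      rw [← natDegree_lt_iff_degree_lt hq0, h1]
      omega
  calc Module.finrank Fq Co
      = Module.finrank Fq (Submodule.map (phiL Fq n) Co) :=
        (Submodule.equivMapOfInjective _ (phiL_injective Fq n) Co).finrank_eq
    _ ≤ Module.finrank Fq M := Submodule.finrank_mono hle
    _ ≤ Module.finrank Fq (degreeLT Fq (n - d)) := Submodule.finrank_map_le _ _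
    _ = n - d := by
        rw [(degreeLTEquiv Fq (n - d)).finrank_eq, Module.finrank_fin_fun]

end Stmt14Aux

open Stmt14Aux in
theorem stmt_14 (q n : ℕ) (hq : IsPrimePow q) [NeZero n] (hcop : Nat.Coprime n q)
    (Fq : Type*) [Field Fq] [Fintype Fq] (hcard : Fintype.card Fq = q)
    (lam₁ lam₂ : Fq) (hlam₁ : lam₁ ≠ 0) (hlam₂ : lam₂ ≠ 0)
    (g₁ g₂ : Fq[X]) (hg₁ : g₁.Monic) (hg₂ : g₂.Monic)
    (hg₁dvd : g₁ ∣ X ^ n - C lam₁) (hg₂dvd : g₂ ∣ X ^ n - C lam₂)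
    (C₁ C₂ : Submodule Fq (ZMod n → Fq))
    (hC₁ : (C₁ : Set (ZMod n → Fq)) = {v | g₁ ∣ ∑ i : ZMod n, C (v i) * X ^ i.val})
    (hC₂ : (C₂ : Set (ZMod n → Fq)) = {v | g₂ ∣ ∑ i : ZMod n, C (v i) * X ^ i.val})
    (k₁ k₂ : ℕ) (hk₁ : Module.finrank Fq C₁ = k₁) (hk₂ : Module.finrank Fq C₂ = k₂)
    (hsum : n < k₁ + k₂) :
    Submodule.span Fq {w : ZMod n → Fq |
        ∃ c₁ ∈ C₁, ∃ c₂ ∈ C₂, w = fun i => c₁ i * c₂ i} = ⊤ := by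
  classical
  have hn : 0 < n := Nat.pos_of_ne_zero (NeZero.ne n)
  have hd₁n : g₁.natDegree ≤ n := by
    have := natDegree_le_of_dvd hg₁dvd (monic_X_pow_sub_C lam₁ hn.ne').ne_zero
    rwa [natDegree_X_pow_sub_C] at this
  have hd₂n : g₂.natDegree ≤ n := by
    have := natDegree_le_of_dvd hg₂dvd (monic_X_pow_sub_C lam₂ hn.ne').ne_zero
    rwa [natDegree_X_pow_sub_C] at this
  have hr₁ : k₁ ≤ n - g₁.natDegree := by
    have := rank_bound hg₁ C₁ hC₁; rwa [hk₁] at this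
  have hr₂ : k₂ ≤ n - g₂.natDegree := by
    have := rank_bound hg₂ C₂ hC₂; rwa [hk₂] at this
  have hlt : g₁.natDegree + g₂.natDegree < n := by omega
  have hg₁0 : g₁.coeff 0 ≠ 0 := by
    intro h
    have hXdvd : (X : Fq[X]) ∣ g₁ := X_dvd_iff.2 h
    have hX : (X : Fq[X]) ∣ C lam₁ := by
      have h1 : (X : Fq[X]) ∣ X ^ n := dvd_pow_self X hn.ne'
      have h2 := hXdvd.trans hg₁dvd
      have h3 := dvd_sub h1 h2
      simpa using h3
    rw [X_dvd_iff, coeff_C_zero] at hX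
    exact hlam₁ hX
  rw [eq_top_iff]
  intro v _
  rw [pi_eq_sum_univ v]
  refine Submodule.sum_mem _ fun a _ => Submodule.smul_mem _ _ ?_
  set j₂ : ℕ := if g₂.natDegree ≤ a.val then a.val - g₂.natDegree
    else a.val + n - g₂.natDegree with hj₂def
  have han : a.val < n := ZMod.val_lt a
  have hj₂ : (g₂.natDegree ≤ a.val ∧ j₂ + g₂.natDegree = a.val) ∨
      (a.val < g₂.natDegree ∧ j₂ + g₂.natDegree = a.val + n) := by
    rw [hj₂def]; split_ifs with h
    · exact Or.inl ⟨h, by omega⟩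
    · exact Or.inr ⟨by omega, by omega⟩
  have hj₂n : j₂ < n := by omega
  set w₁ : ZMod n → Fq :=
    fun i => ((g₁ * X ^ a.val) %ₘ (X ^ n - C lam₁)).coeff i.val with hw₁
  set w₂ : ZMod n → Fq :=
    fun i => ((g₂ * X ^ j₂) %ₘ (X ^ n - C lam₂)).coeff i.val with hw₂
  have hw₁app : ∀ i : ZMod n, w₁ i = if a.val ≤ i.val then g₁.coeff (i.val - a.val)
      else lam₁ * g₁.coeff (i.val + n - a.val) := fun i =>
    shiftVec_apply g₁ lam₁ (by omega) han i
  have hw₂app : ∀ i : ZMod n, w₂ i = if j₂ ≤ i.val then g₂.coeff (i.val - j₂)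
      else lam₂ * g₂.coeff (i.val + n - j₂) := fun i =>
    shiftVec_apply g₂ lam₂ (by omega) hj₂n i
  have hw₁a : w₁ a = g₁.coeff 0 := by rw [hw₁app a, if_pos le_rfl, Nat.sub_self]
  have hw₂a : w₂ a ≠ 0 := by
    rw [hw₂app a]
    rcases hj₂ with ⟨h1, h2⟩ | ⟨h1, h2⟩
    · rw [if_pos (by omega), show a.val - j₂ = g₂.natDegree by omega,
        hg₂.coeff_natDegree]
      exact one_ne_zero
    · rw [if_neg (by omega), show a.val + n - j₂ = g₂.natDegree by omega,
        hg₂.coeff_natDegree, mul_one]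
      exact hlam₂
  have hprod : w₁ a * w₂ a ≠ 0 := mul_ne_zero (hw₁a ▸ hg₁0) hw₂a
  have hvan : ∀ i : ZMod n, i ≠ a → w₁ i * w₂ i = 0 := by
    intro i hia
    have hiva : i.val ≠ a.val := fun h => hia (ZMod.val_injective n h)
    have him : i.val < n := ZMod.val_lt i
    rw [hw₁app i, hw₂app i]
    split_ifs with h1 h2 h2
    · rcases Nat.lt_or_ge g₁.natDegree (i.val - a.val) with h | h
      · rw [coeff_eq_zero_of_natDegree_lt h]; ring
      · rw [coeff_eq_zero_of_natDegree_lt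
          (show g₂.natDegree < i.val - j₂ by omega)]; ring
    · rcases Nat.lt_or_ge g₁.natDegree (i.val - a.val) with h | h
      · rw [coeff_eq_zero_of_natDegree_lt h]; ring
      · rw [coeff_eq_zero_of_natDegree_lt
          (show g₂.natDegree < i.val + n - j₂ by omega)]; ring
    · rcases Nat.lt_or_ge g₁.natDegree (i.val + n - a.val) with h | h
      · rw [coeff_eq_zero_of_natDegree_lt h]; ring
      · rw [coeff_eq_zero_of_natDegree_lt
          (show g₂.natDegree < i.val - j₂ by omega)]; ring
    · rcases Nat.lt_or_ge g₁.natDegree (i.val + n - a.val) with h | h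
      · rw [coeff_eq_zero_of_natDegree_lt h]; ring
      · rw [coeff_eq_zero_of_natDegree_lt
          (show g₂.natDegree < i.val + n - j₂ by omega)]; ring
  have hmem : (fun i => w₁ i * w₂ i) ∈ {w : ZMod n → Fq |
      ∃ c₁ ∈ C₁, ∃ c₂ ∈ C₂, w = fun i => c₁ i * c₂ i} := by
    refine ⟨w₁, ?_, w₂, ?_, rfl⟩
    · have : w₁ ∈ (C₁ : Set (ZMod n → Fq)) := by
        rw [hC₁]
        show g₁ ∣ _
        simp only [hw₁]
        exact shiftVec_mem g₁ lam₁ hg₁dvd a.val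
      exact this
    · have : w₂ ∈ (C₂ : Set (ZMod n → Fq)) := by
        rw [hC₂]
        show g₂ ∣ _
        simp only [hw₂]
        exact shiftVec_mem g₂ lam₂ hg₂dvd j₂
      exact this
  have hsp := Submodule.subset_span (R := Fq) hmem
  have heq : (fun j => if a = j then (1:Fq) else 0)
      = (w₁ a * w₂ a)⁻¹ • fun i => w₁ i * w₂ i := by
    funext i
    by_cases hia : a = i
    · subst hia
      rw [if_pos rfl]
      exact (inv_mul_cancel₀ hprod).symm
    · have h0 : w₁ i * w₂ i = 0 := hvan i (fun h => hia h.symm)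
      simp [hia, h0]
  rw [heq]
  exact Submodule.smul_mem _ _ hsp
end
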